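/- arXiv:2211.00652 — 8 statements merged into one kernel-verified Lean document; each statement's English description precedes it below -/
import Mathlib

section
/- Let P ∈ V1 ⊗ ... ⊗ Vn (n > 2) be 1-concise. Then P is persistent if and only if there exists a nonzero vector e ∈ V1 such that for every covector f ∈ V1* with f(e) ≠ 0, the contraction ⟨f|P is persistent. -/
open scoped BigOperators

/-- Contraction of a tensor by a covector (given in coordinates) in the first factor. -/
noncomputable def contrFirst {n : ℕ} {d : Fin (n + 1) → ℕ} (f : Fin (d 0) → ℂ)
    (T : ((i : Fin (n + 1)) → Fin (d i)) → ℂ) :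
    ((i : Fin n) → Fin (d i.succ)) → ℂ :=
  fun y => ∑ j : Fin (d 0), f j * T (Fin.cons j y)

/-- `T` is 1-concise: it lies in `V₁' ⊗ V₂ ⊗ ⋯ ⊗ Vₙ` only for `V₁' = V₁`.
In coordinates, `T` lies in `V₁' ⊗ (rest)` iff all its first-factor coordinate
slices (as vectors of `V₁`) lie in `V₁'`. -/
noncomputable def Concise1 {n : ℕ} {d : Fin (n + 1) → ℕ}
    (T : ((i : Fin (n + 1)) → Fin (d i)) → ℂ) : Prop :=
  ∀ V' : Submodule ℂ (Fin (d 0) → ℂ),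
    (∀ y : (i : Fin n) → Fin (d i.succ), (fun j => T (Fin.cons j y)) ∈ V') → V' = ⊤

/-- Persistent tensors, defined inductively on the number of factors (`n + 2` factors). -/
noncomputable def Persistent : (n : ℕ) → (d : Fin (n + 2) → ℕ) →
    (((i : Fin (n + 2)) → Fin (d i)) → ℂ) → Prop
  | 0, _, T => Concise1 T
  | n + 1, d, T => Concise1 T ∧ ∃ S : Submodule ℂ (Fin (d 0) → ℂ), S ≠ ⊤ ∧
      ∀ f : Fin (d 0) → ℂ, f ∉ S → Persistent n (fun i => d i.succ) (contrFirst f T)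

/-- Tensor rank: minimal number of simple tensors summing to `T`. -/
noncomputable def tensorRank {ι : Type} [Fintype ι] {κ : ι → Type}
    (T : ((i : ι) → κ i) → ℂ) : ℕ :=
  sInf {r | ∃ v : Fin r → (i : ι) → κ i → ℂ, ∀ x, T x = ∑ p, ∏ i, v p i (x i)}

/-- Border rank: smallest `r` such that `T` is a limit of tensors of rank at most `r`. -/
noncomputable def borderRank {ι : Type} [Fintype ι] {κ : ι → Type}
    (T : ((i : ι) → κ i) → ℂ) : ℕ :=
  sInf {r | ∃ seq : ℕ → (((i : ι) → κ i) → ℂ),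
    (∀ k, tensorRank (seq k) ≤ r) ∧ Filter.Tendsto seq Filter.atTop (nhds T)}

/-- Direct sum of tensors, in coordinates. -/
noncomputable def dsum {n : ℕ} {a b : Fin n → ℕ}
    (T : ((i : Fin n) → Fin (a i)) → ℂ) (P : ((i : Fin n) → Fin (b i)) → ℂ) :
    ((i : Fin n) → Fin (a i + b i)) → ℂ :=
  fun x =>
    if h : ∀ i, (x i).val < a i then T (fun i => ⟨(x i).val, h i⟩)
    else if h' : ∀ i, a i ≤ (x i).val then
      P (fun i => ⟨(x i).val - a i, by have := (x i).isLt; have := h' i; omega⟩)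
    else 0

/-- Kronecker product of tensors (grouping corresponding factors). -/
noncomputable def kron {ι : Type} (κ₁ κ₂ : ι → Type)
    (A : ((i : ι) → κ₁ i) → ℂ) (B : ((i : ι) → κ₂ i) → ℂ) :
    ((i : ι) → κ₁ i × κ₂ i) → ℂ :=
  fun x => A (fun i => (x i).1) * B (fun i => (x i).2)

/-- Tensor product of tensors (as a tensor with all factors of both). -/
noncomputable def tprodT {ι ι' : Type} (κ₁ : ι → Type) (κ₂ : ι' → Type)
    (A : ((i : ι) → κ₁ i) → ℂ) (B : ((i : ι') → κ₂ i) → ℂ) :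
    ((i : ι ⊕ ι') → Sum.elim κ₁ κ₂ i) → ℂ :=
  fun x => A (fun i => x (.inl i)) * B (fun i => x (.inr i))

/-- The n-qudit GHZ tensor `∑ⱼ |j⟩^⊗n`. -/
noncomputable def GHZ (D n : ℕ) : ((Fin n) → Fin D) → ℂ :=
  fun x => if ∃ j : Fin D, ∀ i, x i = j then 1 else 0

/-- The n-qubit W state: sum of basis vectors with exactly one coordinate equal to 1. -/
noncomputable def Wfun (n : ℕ) : ((Fin n) → Fin 2) → ℂ :=
  fun x => if (Finset.univ.filter fun i => x i = 1).card = 1 then 1 else 0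

/-- The n-qudit L state `∑_{j₁+⋯+jₙ = d-1} |j₁⋯jₙ⟩`. -/
noncomputable def Lfun (D n : ℕ) : ((Fin n) → Fin D) → ℂ :=
  fun x => if ∑ i, (x i).val = D - 1 then 1 else 0

/-- Primitive r-th root of unity `exp(2πi/r)`. -/
noncomputable def zeta (r : ℕ) : ℂ := Complex.exp (2 * Real.pi * Complex.I / r)

theorem persistent_iff_exists_vector (n : ℕ) (d : Fin (n + 3) → ℕ)
    (P : ((i : Fin (n + 3)) → Fin (d i)) → ℂ) (hc : Concise1 P) :
    Persistent (n + 1) d P ↔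
      ∃ e : Fin (d 0) → ℂ, e ≠ 0 ∧
        ∀ f : Fin (d 0) → ℂ, (∑ j : Fin (d 0), f j * e j) ≠ 0 →
          Persistent n (fun i => d i.succ) (contrFirst f P) := by
  constructor
  · rintro ⟨-, S, hS, hP⟩
    obtain ⟨φ, hφ, hmap⟩ := Submodule.exists_dual_map_eq_bot_of_lt_top
      (lt_top_iff_ne_top.mpr hS) inferInstance
    refine ⟨fun j => φ (Pi.single j 1), ?_, ?_⟩
    · intro h
      apply hφ
      apply LinearMap.ext
      intro g
      have hg : g = ∑ j : Fin (d 0), g j • (Pi.single j 1 : Fin (d 0) → ℂ) := by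
        funext k
        simp [Pi.single_apply, Finset.sum_apply]
      rw [hg]
      simp only [map_sum, map_smul]
      have : ∀ j, φ (Pi.single j (1 : ℂ)) = 0 := fun j => congrFun h j
      simp [this]
    · intro f hf
      apply hP
      intro hfS
      apply hf
      have : φ f = 0 := by
        have := hmap ▸ Submodule.mem_map_of_mem (f := φ) hfS
        simpa using this
      have hg : f = ∑ j : Fin (d 0), f j • (Pi.single j 1 : Fin (d 0) → ℂ) := by
        funext k
        simp [Pi.single_apply, Finset.sum_apply]
      have key : φ f = ∑ j : Fin (d 0), f j * φ (Pi.single j 1) := by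
        conv_lhs => rw [hg]
        simp [smul_eq_mul]
      simpa [← key] using this
  · rintro ⟨e, he, hP⟩
    refine ⟨hc, ?_⟩
    let φ : (Fin (d 0) → ℂ) →ₗ[ℂ] ℂ :=
      { toFun := fun f => ∑ j : Fin (d 0), f j * e j
        map_add' := by intro f g; simp [add_mul, Finset.sum_add_distrib]
        map_smul' := by intro c f; simp [mul_assoc, Finset.mul_sum]
      }
    refine ⟨LinearMap.ker φ, ?_, ?_⟩
    · intro hker
      obtain ⟨j, hj⟩ := Function.ne_iff.mp he
      have : Pi.single j (1 : ℂ) ∈ LinearMap.ker φ := hker ▸ Submodule.mem_top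
      rw [LinearMap.mem_ker] at this
      apply hj
      simpa [φ, Pi.single_apply] using this
    · intro f hf
      exact hP f (by simpa [φ, LinearMap.mem_ker] using hf)
end

section
/- Let P ∈ V1 ⊗ ... ⊗ Vn (n > 2) be a tensor. P is persistent if and only if for every basis {e_0, ..., e_{d1-1}} of V1 the decomposition P = Σ_j e_j ⊗ P_j has all slices P_j nonzero and at least one slice P_j persistent. -/
/-!
Writing `P = ∑ⱼ eⱼ ⊗ Pⱼ` in a basis `e` of `V₁` forces `Pⱼ = ⟨e*ⱼ|P`, and every basis of `V₁*` is
the dual basis of some basis of `V₁`. So the right-hand side says that for every basis `(fⱼ)` of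
`V₁*` all contractions `⟨fⱼ|P` are nonzero and one of them is persistent. The first condition is
1-conciseness: a proper subspace of `V₁` is annihilated by a nonzero covector, and every nonzero
covector belongs to a basis. The second is the existence of `S`: no basis lies in a proper
subspace, and conversely, if every basis contains a covector with persistent contraction, then the
covectors with non-persistent contraction span a proper subspace.
-/

open scoped BigOperators

open Module Submodule

section Bases

variable {K V ι : Type*} [DivisionRing K] [AddCommGroup V] [Module K V]

theorem Module.Basis.exists_apply_notMem_of_ne_top (b : Basis ι K V) {S : Submodule K V}
    (hS : S ≠ ⊤) : ∃ i, b i ∉ S := by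
  by_contra! h
  refine hS (eq_top_iff.2 ?_)
  rw [← b.span_eq]
  exact span_le.2 (Set.range_subset_iff.2 h)

theorem exists_basis_forall_mem_of_span_eq_top (b : Basis ι K V) {s : Set V}
    (hs : span K s = ⊤) : ∃ e : Basis ι K V, ∀ i, e i ∈ s := by
  let e₀ := Basis.ofSpan hs.ge
  refine ⟨e₀.reindex (e₀.indexEquiv b), fun i => ?_⟩
  rw [Basis.reindex_apply]
  exact Basis.ofSpan_subset hs.ge (Set.mem_range_self _)

theorem exists_basis_apply_eq_of_ne_zero (b : Basis ι K V) {v : V} (hv : v ≠ 0) :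
    ∃ (e : Basis ι K V) (i : ι), e i = v := by
  have hli : LinearIndepOn K id {v} := (linearIndepOn_singleton_iff K).2 hv
  let e₀ := Basis.extend hli
  let σ := e₀.indexEquiv b
  refine ⟨e₀.reindex σ, σ ⟨v, hli.subset_extend _ rfl⟩, ?_⟩
  rw [Basis.reindex_apply, Equiv.symm_apply_apply, Basis.extend_apply_self]

theorem forall_ne_zero_iff_forall_basis (b : Basis ι K V) (p : V → Prop) :
    (∀ v, v ≠ 0 → p v) ↔ ∀ (e : Basis ι K V) i, p (e i) := by
  refine ⟨fun h e i => h _ (e.ne_zero i), fun h v hv => ?_⟩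
  obtain ⟨e, i, rfl⟩ := exists_basis_apply_eq_of_ne_zero b hv
  exact h e i

theorem exists_ne_top_forall_notMem_iff_forall_basis (b : Basis ι K V) (p : V → Prop) :
    (∃ S : Submodule K V, S ≠ ⊤ ∧ ∀ v, v ∉ S → p v) ↔ ∀ e : Basis ι K V, ∃ i, p (e i) := by
  refine ⟨fun ⟨S, hS, h⟩ e => ?_, fun h => ⟨span K {v | ¬p v}, fun htop => ?_, fun v hv => ?_⟩⟩
  · obtain ⟨i, hi⟩ := e.exists_apply_notMem_of_ne_top hS
    exact ⟨i, h _ hi⟩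
  · obtain ⟨e, he⟩ := exists_basis_forall_mem_of_span_eq_top b htop
    obtain ⟨i, hi⟩ := h e
    exact he i hi
  · by_contra hpv
    exact hv (subset_span hpv)

end Bases

namespace Module.Basis

variable {K ι : Type*} [CommRing K] [Fintype ι] [DecidableEq ι]

/-- The dual basis of `e`, with covectors represented as vectors through the dot product. -/
noncomputable def dotProductDual (e : Basis ι K (ι → K)) : Basis ι K (ι → K) :=
  e.dualBasis.map (dotProductEquiv K ι).symm

theorem dotProductEquiv_dotProductDual (e : Basis ι K (ι → K)) (i : ι) :
    dotProductEquiv K ι (e.dotProductDual i) = e.coord i := by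
  rw [dotProductDual, map_apply, LinearEquiv.apply_symm_apply, coe_dualBasis]

theorem dotProductDual_dotProduct (e : Basis ι K (ι → K)) (i : ι) (v : ι → K) :
    e.dotProductDual i ⬝ᵥ v = e.repr v i :=
  LinearMap.congr_fun (e.dotProductEquiv_dotProductDual i) v

theorem dotProductDual_involutive :
    Function.Involutive (dotProductDual : Basis ι K (ι → K) → Basis ι K (ι → K)) := by
  intro e
  refine eq_of_apply_eq fun i => (dotProductEquiv K ι).injective ?_
  rw [dotProductEquiv_dotProductDual]
  refine e.dotProductDual.ext fun j => ?_
  rw [dotProductEquiv_apply_apply, dotProduct_comm, dotProductDual_dotProduct, coord_apply,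
    repr_self, repr_self, Finsupp.single_apply, Finsupp.single_apply]
  exact if_congr eq_comm rfl rfl

end Module.Basis

section Tensors

variable {n : ℕ} {d : Fin (n + 1) → ℕ}

theorem contrFirst_apply (f : Fin (d 0) → ℂ) (T : ((i : Fin (n + 1)) → Fin (d i)) → ℂ)
    (y : (i : Fin n) → Fin (d i.succ)) :
    contrFirst f T y = f ⬝ᵥ fun k => T (Fin.cons k y) :=
  rfl

theorem concise1_iff_forall_contrFirst_ne_zero (T : ((i : Fin (n + 1)) → Fin (d i)) → ℂ) :
    Concise1 T ↔ ∀ f, f ≠ 0 → contrFirst f T ≠ 0 := by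
  refine ⟨fun hT f hf hfT => hf ?_, fun h V hV => ?_⟩
  · have hker := hT (LinearMap.ker (dotProductEquiv ℂ _ f)) fun y => by
      simpa [contrFirst_apply] using congr_fun hfT y
    exact (dotProductEquiv ℂ _).map_eq_zero_iff.1 (LinearMap.ker_eq_top.1 hker)
  · by_contra hV_ne
    obtain ⟨φ, hφ, hVφ⟩ := V.exists_le_ker_of_lt_top (lt_top_iff_ne_top.2 hV_ne)
    refine h ((dotProductEquiv ℂ _).symm φ) (by simpa using hφ) (funext fun y => ?_)
    rw [contrFirst_apply, ← dotProductEquiv_apply_apply, LinearEquiv.apply_symm_apply]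
    exact hVφ (hV y)

theorem eq_sum_mul_iff_eq_contrFirst (T : ((i : Fin (n + 1)) → Fin (d i)) → ℂ)
    (e : Basis (Fin (d 0)) ℂ (Fin (d 0) → ℂ))
    (Ts : Fin (d 0) → (((i : Fin n) → Fin (d i.succ)) → ℂ)) :
    (∀ x, T x = ∑ j, e j (x 0) * Ts j (fun i => x i.succ)) ↔
      Ts = fun j => contrFirst (e.dotProductDual j) T := by
  have hslice : ∀ y, (∀ k, T (Fin.cons k y) = ∑ j, e j k * Ts j y) ↔
      (fun k => T (Fin.cons k y)) = e.equivFun.symm fun j => Ts j y := by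
    intro y
    simp [funext_iff, Basis.equivFun_symm_apply, Finset.sum_apply, mul_comm]
  rw [Fin.forall_fin_succ_pi, forall_comm]
  simp only [Fin.cons_zero, Fin.cons_succ, hslice, LinearEquiv.eq_symm_apply, funext_iff,
    Basis.equivFun_apply, contrFirst_apply, Basis.dotProductDual_dotProduct]
  rw [forall_comm]
  simp only [eq_comm]

end Tensors

theorem persistent_iff_slices (n : ℕ) (d : Fin (n + 3) → ℕ)
    (P : ((i : Fin (n + 3)) → Fin (d i)) → ℂ) :
    Persistent (n + 1) d P ↔
      ∀ (e : Module.Basis (Fin (d 0)) ℂ (Fin (d 0) → ℂ))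
        (Ps : Fin (d 0) → (((i : Fin (n + 2)) → Fin (d i.succ)) → ℂ)),
        (∀ x : (i : Fin (n + 3)) → Fin (d i),
          P x = ∑ j : Fin (d 0), e j (x 0) * Ps j (fun i => x i.succ)) →
        ((∀ j, Ps j ≠ 0) ∧ ∃ j, Persistent n (fun i => d i.succ) (Ps j)) := by
  rw [Persistent, concise1_iff_forall_contrFirst_ne_zero,
    forall_ne_zero_iff_forall_basis (Pi.basisFun ℂ _),
    exists_ne_top_forall_notMem_iff_forall_basis (Pi.basisFun ℂ _), ← forall_and,
    Basis.dotProductDual_involutive.surjective.forall]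
  refine forall_congr' fun e => ?_
  simp only [eq_sum_mul_iff_eq_contrFirst, forall_eq]
end

section
/- The tensor rank of the n-qubit W state W_n = Σ_{i=0}^{n-1} |0⟩^⊗(n-i-1) ⊗ |1⟩ ⊗ |0⟩^⊗i in (ℂ²)^⊗n equals n, for n ≥ 2. -/
open scoped BigOperators

-- auxiliary
def Decomp {ι : Type} [Fintype ι] {κ : ι → Type}
    (T : ((i : ι) → κ i) → ℂ) (r : ℕ) : Prop :=
  ∃ v : Fin r → (i : ι) → κ i → ℂ, ∀ x, T x = ∑ p, ∏ i, v p i (x i)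

lemma tensorRank_le {ι : Type} [Fintype ι] {κ : ι → Type}
    (T : ((i : ι) → κ i) → ℂ) (r : ℕ) (h : Decomp T r) : tensorRank T ≤ r :=
  Nat.sInf_le h

lemma le_tensorRank {ι : Type} [Fintype ι] {κ : ι → Type}
    (T : ((i : ι) → κ i) → ℂ) (m : ℕ) (hne : ∃ r, Decomp T r)
    (h : ∀ r, Decomp T r → m ≤ r) : m ≤ tensorRank T :=
  h _ (Nat.sInf_mem hne)

lemma fin2_eq_zero (a : Fin 2) (h : ¬ a = 1) : a = 0 := by
  revert h; revert a; decide

lemma prodIndicator {n : ℕ} (P : Fin n → Prop) [DecidablePred P] :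
    (∏ i, if P i then (1:ℂ) else 0) = if ∀ i, P i then 1 else 0 := by
  by_cases h : ∀ i, P i
  · simp [h]
  · push_neg at h
    obtain ⟨i, hi⟩ := h
    rw [if_neg (by push_neg; exact ⟨i, hi⟩)]
    exact Finset.prod_eq_zero (Finset.mem_univ i) (by simp [hi])

lemma exists_decomp {n : ℕ} (T : (Fin (n+1) → Fin 2) → ℂ) : ∃ r, Decomp T r := by
  classical
  set e : Fin (Fintype.card (Fin (n+1) → Fin 2)) ≃ (Fin (n+1) → Fin 2) :=
    (Fintype.equivFin _).symm with he
  refine ⟨_, fun p i k => (if i = 0 then T (e p) else 1) * (if k = e p i then 1 else 0), fun x => ?_⟩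
  have key : ∀ p, (∏ i, (if i = 0 then T (e p) else 1) * (if x i = e p i then 1 else 0))
      = T (e p) * (if x = e p then 1 else 0) := by
    intro p
    rw [Finset.prod_mul_distrib]
    congr 1
    · rw [Fin.prod_univ_succ]
      simp [Fin.succ_ne_zero]
    · rw [prodIndicator]
      congr 1
      simp [funext_iff]
  simp only [key]
  rw [Equiv.sum_comp e (fun z => T z * (if x = z then 1 else 0))]
  simp

lemma subst_lemma {n : ℕ} (T : (Fin (n+2) → Fin 2) → ℂ) (m : ℕ)
    (hT1 : ∃ y : Fin (n+1) → Fin 2, T (Fin.cons 1 y) ≠ 0)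
    (hlow : ∀ c : ℂ, m ≤ tensorRank
      (fun y : Fin (n+1) → Fin 2 => T (Fin.cons 0 y) + c * T (Fin.cons 1 y))) :
    m + 1 ≤ tensorRank T := by
  apply le_tensorRank _ _ (exists_decomp T)
  rintro r ⟨v, hv⟩
  set B : Fin r → (Fin (n+1) → Fin 2) → ℂ :=
    fun p y => ∏ i : Fin (n+1), v p i.succ (y i) with hB
  have hsplit : ∀ (j : Fin 2) (y : Fin (n+1) → Fin 2),
      T (Fin.cons j y) = ∑ p, v p 0 j * B p y := by
    intro j y
    rw [hv]
    refine Finset.sum_congr rfl fun p _ => ?_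
    rw [Fin.prod_univ_succ]
    simp [hB]
  obtain ⟨y0, hy0⟩ := hT1
  rw [hsplit] at hy0
  obtain ⟨q, -, hq⟩ := Finset.exists_ne_zero_of_sum_ne_zero hy0
  have hβ : v q 0 1 ≠ 0 := fun h => hq (by simp [h])
  obtain ⟨r', rfl⟩ : ∃ r', r = r' + 1 := ⟨r - 1, by have := q.pos; omega⟩
  set c' : ℂ := - (v q 0 0 / v q 0 1) with hc'
  have hdec : Decomp (fun y : Fin (n+1) → Fin 2 =>
      T (Fin.cons 0 y) + c' * T (Fin.cons 1 y)) r' := by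
    refine ⟨fun p' i k => (if i = 0 then
      (v (q.succAbove p') 0 0 + c' * v (q.succAbove p') 0 1) else 1)
        * v (q.succAbove p') i.succ k, fun y => ?_⟩
    have key : ∀ p' : Fin r',
        (∏ i : Fin (n+1), (if i = 0 then
          (v (q.succAbove p') 0 0 + c' * v (q.succAbove p') 0 1) else 1)
            * v (q.succAbove p') i.succ (y i))
        = (v (q.succAbove p') 0 0 + c' * v (q.succAbove p') 0 1) * B (q.succAbove p') y := by
      intro p'
      rw [Finset.prod_mul_distrib]
      congr 1
      rw [Fin.prod_univ_succ]
      simp [Fin.succ_ne_zero]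
    simp only [key]
    have expand : T (Fin.cons 0 y) + c' * T (Fin.cons 1 y)
        = ∑ p, (v p 0 0 + c' * v p 0 1) * B p y := by
      rw [hsplit, hsplit, Finset.mul_sum, ← Finset.sum_add_distrib]
      refine Finset.sum_congr rfl fun p _ => ?_
      ring
    rw [expand, Fin.sum_univ_succAbove _ q]
    have hzero : (v q 0 0 + c' * v q 0 1) = 0 := by
      rw [hc']
      field_simp
      ring
    rw [hzero]
    simp
  have := le_trans (hlow c') (tensorRank_le _ _ hdec)
  omega

noncomputable def Zfun (n : ℕ) : (Fin n → Fin 2) → ℂ :=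
  fun x => if ∀ i, x i = 0 then 1 else 0

lemma card_filter_eq_sum {n : ℕ} (x : Fin n → Fin 2) :
    (Finset.univ.filter fun i => x i = 1).card = ∑ i, if x i = 1 then 1 else 0 := by
  rw [Finset.card_filter]

lemma Wfun_cons_zero {n : ℕ} (y : Fin n → Fin 2) :
    Wfun (n+1) (Fin.cons 0 y) = Wfun n y := by
  unfold Wfun
  rw [card_filter_eq_sum, card_filter_eq_sum, Fin.sum_univ_succ]
  simp

lemma Wfun_cons_one {n : ℕ} (y : Fin n → Fin 2) :
    Wfun (n+1) (Fin.cons 1 y) = Zfun n y := by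
  unfold Wfun Zfun
  rw [card_filter_eq_sum, Fin.sum_univ_succ]
  simp only [Fin.cons_zero, Fin.cons_succ]
  simp only [if_true]
  congr 1
  have : ((1 + ∑ i : Fin n, if y i = 1 then 1 else 0) = 1) ↔
      (∑ i : Fin n, (if y i = 1 then 1 else 0)) = 0 := by omega
  rw [eq_iff_iff, this, Finset.sum_eq_zero_iff]
  constructor
  · intro h i
    have := h i (Finset.mem_univ i)
    exact fin2_eq_zero _ (by intro h1; simp [h1] at this)
  · intro h i _
    simp [h i]

lemma Zfun_cons_zero {n : ℕ} (y : Fin n → Fin 2) :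
    Zfun (n+1) (Fin.cons 0 y) = Zfun n y := by
  unfold Zfun
  congr 1
  rw [eq_iff_iff, Fin.forall_fin_succ]
  simp

lemma Zfun_cons_one {n : ℕ} (y : Fin n → Fin 2) :
    Zfun (n+1) (Fin.cons 1 y) = 0 := by
  unfold Zfun
  rw [if_neg]
  intro h
  have := h 0
  simp at this

lemma Zfun_zero_ne {n : ℕ} : Zfun n (fun _ => 0) = 1 := by simp [Zfun]

lemma Wkey : ∀ (n : ℕ) (c : ℂ),
    n + 1 ≤ tensorRank (fun x : Fin (n+1) → Fin 2 => Wfun (n+1) x + c * Zfun (n+1) x) := by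
  intro n
  induction n with
  | zero =>
    intro c
    apply le_tensorRank _ _ (exists_decomp _)
    rintro r ⟨v, hv⟩
    rcases Nat.eq_zero_or_pos r with rfl | h
    · exfalso
      have := hv (fun _ => 1)
      simp [Wfun, Zfun] at this
    · exact h
  | succ n ih =>
    intro c
    apply subst_lemma
    · refine ⟨fun _ => 0, ?_⟩
      simp [Wfun_cons_one, Zfun_cons_one, Zfun_zero_ne]
    · intro c'
      have heq : (fun y : Fin (n+1) → Fin 2 =>
          (Wfun (n+2) (Fin.cons 0 y) + c * Zfun (n+2) (Fin.cons 0 y))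
          + c' * (Wfun (n+2) (Fin.cons 1 y) + c * Zfun (n+2) (Fin.cons 1 y)))
          = fun y => Wfun (n+1) y + (c + c') * Zfun (n+1) y := by
        funext y
        rw [Wfun_cons_zero, Wfun_cons_one, Zfun_cons_zero, Zfun_cons_one]
        ring
      rw [heq]
      exact ih (c + c')

lemma W_upper (n : ℕ) : Decomp (Wfun n) n := by
  classical
  set e : Fin n → (Fin n → Fin 2) := fun p i => if i = p then 1 else 0 with he
  refine ⟨fun p i k => if k = e p i then 1 else 0, fun x => ?_⟩
  have key : ∀ p : Fin n, (∏ i, if x i = e p i then (1:ℂ) else 0)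
      = if x = e p then 1 else 0 := by
    intro p
    rw [prodIndicator]
    congr 1
    simp [funext_iff]
  simp only [key]
  have hfil : ∀ p : Fin n, x = e p ↔ (Finset.univ.filter fun i => x i = 1) = {p} := by
    intro p
    constructor
    · rintro rfl
      ext i
      simp only [Finset.mem_filter, Finset.mem_univ, true_and, Finset.mem_singleton, he]
      constructor
      · intro h
        by_contra hip
        simp [hip] at h
      · rintro rfl; simp
    · intro h
      funext i
      by_cases hip : i = p
      · subst hip
        have : i ∈ Finset.univ.filter fun j => x j = 1 := by rw [h]; simp
        simp only [Finset.mem_filter] at this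
        simp [he, this.2]
      · have : i ∉ Finset.univ.filter fun j => x j = 1 := by rw [h]; simp [hip]
        simp only [Finset.mem_filter, Finset.mem_univ, true_and] at this
        simp [he, hip, fin2_eq_zero _ this]
  unfold Wfun
  by_cases h : (Finset.univ.filter fun i => x i = 1).card = 1
  · obtain ⟨p0, hp0⟩ := Finset.card_eq_one.mp h
    rw [if_pos h, Finset.sum_eq_single p0]
    · rw [if_pos ((hfil p0).mpr hp0)]
    · intro p _ hp
      rw [if_neg]
      intro hx
      have := ((hfil p).mp hx).symm.trans hp0
      simp only [Finset.singleton_inj] at this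
      exact hp this
    · intro hp0'
      exact absurd (Finset.mem_univ p0) hp0'
  · rw [if_neg h]
    symm
    apply Finset.sum_eq_zero
    intro p _
    rw [if_neg]
    intro hx
    exact h (by rw [(hfil p).mp hx]; simp)

theorem rank_W (n : ℕ) (hn : 2 ≤ n) : tensorRank (Wfun n) = n := by
  obtain ⟨m, rfl⟩ : ∃ m, n = m + 1 := ⟨n - 1, by omega⟩
  refine le_antisymm (tensorRank_le _ _ (W_upper _)) ?_
  have := Wkey m 0
  have heq : (fun x : Fin (m+1) → Fin 2 => Wfun (m+1) x + 0 * Zfun (m+1) x)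
      = Wfun (m+1) := by funext x; ring
  rwa [heq] at this
end

section
/- The n-qubit W state W_n = Σ_{i=0}^{n-1} |0⟩^⊗(n-i-1) ⊗ |1⟩ ⊗ |0⟩^⊗i is a persistent tensor for all n ≥ 2. -/
open scoped BigOperators

/-- Indicator of the all-zero string. -/
noncomputable def e0ind (k : ℕ) : ((Fin k) → Fin 2) → ℂ :=
  fun x => if ∀ i, x i = 0 then 1 else 0

/-- The family `a • W + b • |0…0⟩`. -/
noncomputable def WT (k : ℕ) (a b : ℂ) : ((Fin k) → Fin 2) → ℂ :=
  fun x => a * Wfun k x + b * e0ind k x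

lemma fin2_eq_zero_iff (j : Fin 2) : j = 0 ↔ ¬ j = 1 := by
  fin_cases j <;> simp

lemma Wfun_cons (k : ℕ) (j : Fin 2) (y : Fin k → Fin 2) :
    Wfun (k + 1) (Fin.cons j y) = if j = 1 then e0ind k y else Wfun k y := by
  unfold Wfun e0ind
  have hcard : (Finset.univ.filter fun i : Fin (k+1) => (Fin.cons j y : Fin (k+1) → Fin 2) i = 1).card
      = (if j = 1 then 1 else 0)
        + (Finset.univ.filter fun i : Fin k => y i = 1).card := by
    simp only [Finset.card_filter]
    rw [Fin.sum_univ_succ]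
    simp [Fin.cons_zero, Fin.cons_succ]
  rw [hcard]
  have hzero : (∀ i, y i = 0) ↔ (Finset.univ.filter fun i : Fin k => y i = 1).card = 0 := by
    simp only [Finset.card_eq_zero, Finset.filter_eq_empty_iff, Finset.mem_univ, true_imp_iff]
    exact forall_congr' fun i => by rw [fin2_eq_zero_iff]
  by_cases hj : j = 1 <;> simp [hj, hzero]

lemma e0ind_cons (k : ℕ) (j : Fin 2) (y : Fin k → Fin 2) :
    e0ind (k + 1) (Fin.cons j y) = if j = 0 then e0ind k y else 0 := by
  unfold e0ind
  have : (∀ i : Fin (k+1), (Fin.cons j y : Fin (k+1) → Fin 2) i = 0) ↔ (j = 0 ∧ ∀ i, y i = 0) := by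
    constructor
    · intro h
      exact ⟨by simpa using h 0, fun i => by simpa using h i.succ⟩
    · rintro ⟨hj, hy⟩ i
      induction i using Fin.cases with
      | zero => simpa using hj
      | succ i => simpa using hy i
  by_cases hj : j = 0 <;> simp only [this] <;> simp [hj]

lemma WT_cons (k : ℕ) (a b : ℂ) (j : Fin 2) (y : Fin k → Fin 2) :
    WT (k + 1) a b (Fin.cons j y)
      = if j = 1 then a * e0ind k y else a * Wfun k y + b * e0ind k y := by
  unfold WT
  rw [Wfun_cons, e0ind_cons]
  fin_cases j <;> simp

lemma Wfun_zero (k : ℕ) : Wfun k (fun _ => 0) = 0 := by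
  unfold Wfun
  simp

lemma e0ind_zero (k : ℕ) : e0ind k (fun _ => 0) = 1 := by
  unfold e0ind; simp

/-- If a submodule of `ℂ²` contains `(b, a)` and `(a, 0)` with `a ≠ 0`, it is everything. -/
lemma span2 (V' : Submodule ℂ (Fin 2 → ℂ)) {a b : ℂ} (ha : a ≠ 0)
    (h1 : (![b, a] : Fin 2 → ℂ) ∈ V') (h2 : (![a, 0] : Fin 2 → ℂ) ∈ V') : V' = ⊤ := by
  rw [eq_top_iff]
  intro v _
  have he0 : (![1, 0] : Fin 2 → ℂ) ∈ V' := by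
    have h := V'.smul_mem a⁻¹ h2
    have : (a⁻¹ • (![a, 0] : Fin 2 → ℂ)) = ![1, 0] := by
      funext j; fin_cases j <;> simp [inv_mul_cancel₀ ha]
    rwa [this] at h
  have he1 : (![0, 1] : Fin 2 → ℂ) ∈ V' := by
    have h := V'.smul_mem a⁻¹ (V'.sub_mem h1 (V'.smul_mem b he0))
    have : (a⁻¹ • ((![b, a] : Fin 2 → ℂ) - b • ![1, 0])) = ![0, 1] := by
      funext j; fin_cases j <;> simp [inv_mul_cancel₀ ha]
    rwa [this] at h
  have : v = v 0 • (![1, 0] : Fin 2 → ℂ) + v 1 • ![0, 1] := by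
    funext j; fin_cases j <;> simp
  rw [this]
  exact V'.add_mem (V'.smul_mem _ he0) (V'.smul_mem _ he1)

lemma WT_concise (k : ℕ) (a b : ℂ) (ha : a ≠ 0) :
    Concise1 (n := k + 1) (d := fun _ => 2) (WT (k + 2) a b) := by
  intro V' hV
  apply span2 V' ha
  · have h := hV (fun _ => 0)
    have : (fun j : Fin 2 => WT (k + 2) a b (Fin.cons j fun _ => 0)) = ![b, a] := by
      funext j
      rw [WT_cons (k + 1) a b]
      fin_cases j <;> simp [Wfun_zero, e0ind_zero]
    rwa [this] at h
  · have h := hV (Fin.cons 1 fun _ => 0)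
    have : (fun j : Fin 2 => WT (k + 2) a b (Fin.cons j (Fin.cons 1 fun _ => 0))) = ![a, 0] := by
      funext j
      rw [WT_cons (k + 1) a b]
      fin_cases j <;>
        simp [Wfun_cons, e0ind_cons, Wfun_zero, e0ind_zero]
    rwa [this] at h

lemma contrFirst_WT (k : ℕ) (a b : ℂ) (f : Fin 2 → ℂ) :
    contrFirst (n := k + 1) (d := fun _ => 2) f (WT (k + 2) a b)
      = WT (k + 1) (f 0 * a) (f 0 * b + f 1 * a) := by
  funext y
  unfold contrFirst
  rw [Fin.sum_univ_two]
  rw [WT_cons (k + 1) a b, WT_cons (k + 1) a b]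
  unfold WT
  simp
  ring

lemma WT_persistent (m : ℕ) (a b : ℂ) (ha : a ≠ 0) :
    Persistent m (fun _ => 2) (WT (m + 2) a b) := by
  induction m generalizing a b with
  | zero => exact WT_concise 0 a b ha
  | succ n ih =>
    refine ⟨WT_concise (n + 1) a b ha, LinearMap.ker (LinearMap.proj (R := ℂ) (φ := fun _ : Fin 2 => ℂ) 0), ?_, ?_⟩
    · intro h
      have : (![1, 0] : Fin 2 → ℂ) ∈ LinearMap.ker (LinearMap.proj (R := ℂ) (φ := fun _ : Fin 2 => ℂ) 0) := by
        rw [h]; trivial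
      simp [LinearMap.mem_ker] at this
    · intro f hf
      have hf0 : f 0 ≠ 0 := by
        intro h0
        exact hf (by simp [LinearMap.mem_ker, h0])
      show Persistent n (fun _ => 2) _
      rw [contrFirst_WT]
      exact ih _ _ (mul_ne_zero hf0 ha)

theorem W_persistent (m : ℕ) :
    Persistent m (fun _ => 2) (Wfun (m + 2)) := by
  have : Wfun (m + 2) = WT (m + 2) 1 0 := by
    funext x; unfold WT; ring
  rw [this]
  exact WT_persistent m 1 0 one_ne_zero
end

section
/- Let T ∈ (ℂ^d)^⊗n be a tensor of the form T = Σ_{j1+...+jn < d} t_{j1...jn} |j1...jn⟩, supported on indices with coordinate sum less than d. If the coefficients of the basis vectors |0⟩^⊗(n-i-2) ⊗ |j⟩ ⊗ |0⟩^⊗i ⊗ |d-j-1⟩ are nonzero for all 0 ≤ i ≤ n-2 and 0 ≤ j ≤ d-1, then T is a persistent tensor. -/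
open scoped BigOperators

lemma sum_if_two {N : ℕ} (p q : Fin N) (hpq : p ≠ q) (a b : ℕ) :
    ∑ i : Fin N, (if i = p then a else if i = q then b else 0) = a + b := by
  have h : ∀ i : Fin N, (if i = p then a else if i = q then b else 0)
      = (if i = p then a else 0) + (if i = q then b else 0) := by
    intro i
    by_cases h1 : i = p
    · subst h1; simp [hpq]
    · simp [h1]
  simp only [h, Finset.sum_add_distrib]
  simp [Finset.sum_ite_eq']

noncomputable def basisVec (n D : ℕ) (hD : 0 < D) (k : Fin (n + 1)) (j : Fin D) :
    Fin (n + 2) → Fin D :=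
  fun i => if i = Fin.last (n + 1) then ⟨D - 1 - j.val, Nat.lt_of_le_of_lt (Nat.sub_le _ _) (Nat.sub_lt hD Nat.one_pos)⟩
    else if i = k.castSucc then j else ⟨0, hD⟩

lemma sum_basisVec (n D : ℕ) (hD : 0 < D) (k : Fin (n + 1)) (j : Fin D) :
    ∑ i, (basisVec n D hD k j i).val = D - 1 := by
  have h : ∀ i, (basisVec n D hD k j i).val
      = if i = Fin.last (n + 1) then D - 1 - j.val else if i = k.castSucc then j.val else 0 := by
    intro i; unfold basisVec; split_ifs <;> rfl
  rw [Finset.sum_congr rfl (fun i _ => h i),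
    sum_if_two (Fin.last (n + 1)) k.castSucc (Ne.symm (Fin.castSucc_lt_last k).ne) _ _]
  have := j.isLt; omega

noncomputable def tailVec (n D : ℕ) (hD : 0 < D) (j : Fin D) : Fin (n + 1) → Fin D :=
  fun i => if i = Fin.last n then ⟨D - 1 - j.val, Nat.lt_of_le_of_lt (Nat.sub_le _ _) (Nat.sub_lt hD Nat.one_pos)⟩ else ⟨0, hD⟩

lemma sum_tailVec (n D : ℕ) (hD : 0 < D) (j : Fin D) :
    ∑ i, (tailVec n D hD j i).val = D - 1 - j.val := by
  have h : ∀ i, (tailVec n D hD j i).val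
      = if i = Fin.last n then D - 1 - j.val else 0 := by
    intro i; unfold tailVec; split_ifs <;> rfl
  rw [Finset.sum_congr rfl (fun i _ => h i), Finset.sum_ite_eq']
  simp

lemma cons_tailVec (n D : ℕ) (hD : 0 < D) (j m : Fin D) :
    Fin.cons m (tailVec n D hD j) = Function.update (basisVec n D hD 0 j) 0 m := by
  funext i
  refine Fin.cases ?_ (fun i' => ?_) i
  · simp
  · have h1 : i'.succ ≠ (0 : Fin (n + 2)) := Fin.succ_ne_zero i'
    rw [Fin.cons_succ, Function.update_of_ne h1]
    unfold basisVec tailVec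
    have h2 : (i'.succ = Fin.last (n + 1)) ↔ (i' = Fin.last n) := by
      rw [← Fin.succ_last, Fin.succ_inj]
    have h3 : i'.succ ≠ (Fin.castSucc (0 : Fin (n+1))) := by
      simpa using Fin.succ_ne_zero i'
    by_cases h : i' = Fin.last n
    · rw [if_pos (h2.mpr h), if_pos h]
    · rw [if_neg (fun hh => h (h2.mp hh)), if_neg h, if_neg h3]

lemma basisVec_zero_eq (n D : ℕ) (hD : 0 < D) (j : Fin D) :
    basisVec n D hD 0 j = Fin.cons j (tailVec n D hD j) := by
  rw [cons_tailVec]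
  funext i
  by_cases h : i = 0
  · subst h
    rw [Function.update_self]
    unfold basisVec
    have : (0 : Fin (n+2)) ≠ Fin.last (n+1) := by
      simp [Fin.ext_iff]
    rw [if_neg this]
    simp
  · rw [Function.update_of_ne h]

lemma conciseAux (n D : ℕ) (hD : 0 < D) (T : ((i : Fin (n + 2)) → Fin D) → ℂ)
    (hsupp : ∀ x : (i : Fin (n + 2)) → Fin D, D ≤ ∑ i, (x i).val → T x = 0)
    (hc : ∀ j : Fin D, T (basisVec n D hD 0 j) ≠ 0) : Concise1 T := by
  intro V' hV'
  have step : ∀ j : Fin D, (∀ j' : Fin D, j' < j → (Pi.single j' (1 : ℂ) : Fin D → ℂ) ∈ V') →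
      (Pi.single j (1 : ℂ) : Fin D → ℂ) ∈ V' := by
    intro j hsm
    set s : Fin D → ℂ := fun m => T (Fin.cons m (tailVec n D hD j)) with hs
    have hsV : s ∈ V' := hV' (tailVec n D hD j)
    have hdiag : s j ≠ 0 := by
      have : s j = T (basisVec n D hD 0 j) := by rw [hs, basisVec_zero_eq]
      rw [this]; exact hc j
    have hzero : ∀ m : Fin D, j.val < m.val → s m = 0 := by
      intro m hm
      apply hsupp
      rw [Fin.sum_univ_succ]
      simp only [Fin.cons_zero, Fin.cons_succ]
      rw [sum_tailVec]
      have := j.isLt; omega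
    have hmem : (s j)⁻¹ • (s - ∑ m ∈ Finset.univ.filter (fun m : Fin D => m.val < j.val),
        s m • (Pi.single m (1 : ℂ) : Fin D → ℂ)) ∈ V' := by
      refine Submodule.smul_mem _ _ (Submodule.sub_mem _ hsV (Submodule.sum_mem _ ?_))
      intro m hm
      exact Submodule.smul_mem _ _ (hsm m (by
        have := (Finset.mem_filter.mp hm).2; exact Fin.lt_def.mpr this))
    have heq : (Pi.single j (1 : ℂ) : Fin D → ℂ) = (s j)⁻¹ • (s - ∑ m ∈ Finset.univ.filter
        (fun m : Fin D => m.val < j.val), s m • (Pi.single m (1 : ℂ) : Fin D → ℂ)) := by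
      funext i
      have hsum : (∑ m ∈ Finset.univ.filter (fun m : Fin D => m.val < j.val),
          s m • (Pi.single m (1 : ℂ) : Fin D → ℂ)) i = if i.val < j.val then s i else 0 := by
        rw [Finset.sum_apply]
        have h1 : ∀ m : Fin D, (s m • (Pi.single m (1 : ℂ) : Fin D → ℂ)) i = if i = m then s m else 0 := by
          intro m
          rw [Pi.smul_apply, Pi.single_apply]
          split_ifs <;> simp
        rw [Finset.sum_congr rfl (fun m _ => h1 m), Finset.sum_ite_eq]
        simp [Finset.mem_filter]
      rw [Pi.smul_apply, Pi.sub_apply, hsum]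
      rcases lt_trichotomy i.val j.val with h | h | h
      · rw [if_pos h, Pi.single_apply, if_neg (fun he => by subst he; omega)]
        simp
      · have hij : i = j := Fin.ext h
        subst hij
        rw [if_neg (lt_irrefl _), Pi.single_eq_same, sub_zero, smul_eq_mul,
          inv_mul_cancel₀ hdiag]
      · rw [if_neg (by omega), Pi.single_apply, if_neg (fun he => by subst he; omega),
          hzero i h]
        simp
    rw [heq]; exact hmem
  have keyN : ∀ m : ℕ, ∀ j : Fin D, j.val ≤ m → (Pi.single j (1 : ℂ) : Fin D → ℂ) ∈ V' := by
    intro m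
    induction m with
    | zero =>
      intro j hj
      exact step j (fun j' hj' => absurd (Fin.lt_def.mp hj') (by omega))
    | succ m ih =>
      intro j hj
      exact step j (fun j' hj' => ih j' (by have := Fin.lt_def.mp hj'; omega))
  have key : ∀ j : Fin D, (Pi.single j (1 : ℂ) : Fin D → ℂ) ∈ V' :=
    fun j => keyN j.val j le_rfl
  rw [Submodule.eq_top_iff']
  intro v
  have hv : v = ∑ j : Fin D, v j • (Pi.single j (1 : ℂ) : Fin D → ℂ) := by
    funext i
    rw [Finset.sum_apply]
    simp only [Pi.smul_apply, Pi.single_apply, smul_eq_mul, mul_ite, mul_one, mul_zero]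
    rw [Finset.sum_ite_eq]
    simp
  rw [hv]
  exact Submodule.sum_mem _ (fun j _ => Submodule.smul_mem _ _ (key j))


lemma cons_zero_basisVec (n D : ℕ) (hD : 0 < D) (k : Fin (n + 1)) (j : Fin D) :
    Fin.cons (⟨0, hD⟩ : Fin D) (basisVec n D hD k j) = basisVec (n + 1) D hD k.succ j := by
  funext i
  refine Fin.cases ?_ (fun i' => ?_) i
  · rw [Fin.cons_zero]
    unfold basisVec
    have h1 : (0 : Fin (n + 3)) ≠ Fin.last (n + 2) := by simp [Fin.ext_iff]
    have h2 : (0 : Fin (n + 3)) ≠ (k.succ).castSucc := by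
      rw [← Fin.succ_castSucc]; exact (Fin.succ_ne_zero _).symm
    rw [if_neg h1, if_neg h2]
  · rw [Fin.cons_succ]
    unfold basisVec
    have h2 : (i'.succ = Fin.last (n + 2)) ↔ (i' = Fin.last (n + 1)) := by
      rw [← Fin.succ_last, Fin.succ_inj]
    have h3 : (i'.succ = (k.succ).castSucc) ↔ (i' = k.castSucc) := by
      rw [← Fin.succ_castSucc, Fin.succ_inj]
    by_cases ha : i' = Fin.last (n + 1)
    · rw [if_pos (h2.mpr ha), if_pos ha]
    · rw [if_neg (fun h => ha (h2.mp h)), if_neg ha]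
      by_cases hb : i' = k.castSucc
      · rw [if_pos (h3.mpr hb), if_pos hb]
      · rw [if_neg (fun h => hb (h3.mp h)), if_neg hb]

lemma mainAux : ∀ (n D : ℕ) (hD : 0 < D) (T : ((i : Fin (n + 2)) → Fin D) → ℂ),
    (∀ x : (i : Fin (n + 2)) → Fin D, D ≤ ∑ i, (x i).val → T x = 0) →
    (∀ (k : Fin (n + 1)) (j : Fin D), T (basisVec n D hD k j) ≠ 0) →
    Persistent n (fun _ => D) T := by
  intro n
  induction n with
  | zero =>
    intro D hD T hsupp hcoef
    exact conciseAux 0 D hD T hsupp (hcoef 0)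
  | succ n ih =>
    intro D hD T hsupp hcoef
    refine ⟨conciseAux (n + 1) D hD T hsupp (hcoef 0), ?_⟩
    refine ⟨LinearMap.ker (LinearMap.proj (⟨0, hD⟩ : Fin D) : (Fin D → ℂ) →ₗ[ℂ] ℂ), ?_, ?_⟩
    · intro h
      have h1 : (fun _ => (1 : ℂ)) ∈
          LinearMap.ker (LinearMap.proj (⟨0, hD⟩ : Fin D) : (Fin D → ℂ) →ₗ[ℂ] ℂ) := by
        rw [h]; trivial
      simp [LinearMap.mem_ker] at h1
    · intro f hf
      have hf0 : f ⟨0, hD⟩ ≠ 0 := by simpa [LinearMap.mem_ker] using hf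
      apply ih D hD (contrFirst f T)
      · intro x hx
        unfold contrFirst
        apply Finset.sum_eq_zero
        intro m _
        rw [hsupp _ ?_, mul_zero]
        rw [Fin.sum_univ_succ]
        simp only [Fin.cons_zero, Fin.cons_succ]
        exact le_trans hx (Nat.le_add_left _ _)
      · intro k j
        unfold contrFirst
        rw [Finset.sum_eq_single (⟨0, hD⟩ : Fin D)]
        · rw [cons_zero_basisVec]
          exact mul_ne_zero hf0 (hcoef k.succ j)
        · intro m _ hm
          rw [hsupp _ ?_, mul_zero]
          rw [Fin.sum_univ_succ]
          simp only [Fin.cons_zero, Fin.cons_succ]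
          rw [sum_basisVec]
          have hm0 : m.val ≠ 0 := fun h => hm (Fin.ext h)
          omega
        · intro h
          exact absurd (Finset.mem_univ _) h

theorem lower_support_tensor_persistent (n D : ℕ) (hD : 0 < D)
    (T : ((i : Fin (n + 2)) → Fin D) → ℂ)
    (hsupp : ∀ x : (i : Fin (n + 2)) → Fin D, D ≤ ∑ i, (x i).val → T x = 0)
    (hcoef : ∀ (k : Fin (n + 1)) (j : Fin D),
      T (fun i => if i = Fin.last (n + 1) then ⟨D - 1 - j.val, by have := j.isLt; omega⟩
          else if i = k.castSucc then j else ⟨0, hD⟩) ≠ 0) :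
    Persistent n (fun _ => D) T := by
  exact mainAux n D hD T hsupp hcoef
end

section
/- The tensor rank of the n-qudit L state L(d,n) = Σ_{j1+...+jn = d-1} |j1 ... jn⟩ ∈ (ℂ^d)^⊗n equals (n-1)(d-1) + 1, for n ≥ 2, d ≥ 2. -/
open scoped BigOperators

noncomputable def fext (D : ℕ) (f : Fin D → ℂ) : ℕ → ℂ := fun k => if h : k < D then f ⟨k, h⟩ else 0

noncomputable def ginv (D : ℕ) (f : Fin D → ℂ) : ℕ → ℂ :=
  fun k => PowerSeries.coeff k (PowerSeries.mk (fext D f))⁻¹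

theorem conv (D : ℕ) (hD : 0 < D) (f : Fin D → ℂ) (hf : f ⟨0, hD⟩ ≠ 0) (c : ℕ) :
    ∑ i ∈ Finset.range (c+1), ginv D f i * fext D f (c - i) = if c = 0 then 1 else 0 := by
  have h0 : PowerSeries.constantCoeff (PowerSeries.mk (fext D f)) ≠ 0 := by
    simpa [fext, hD] using hf
  have h1 : (PowerSeries.mk (fext D f))⁻¹ * (PowerSeries.mk (fext D f)) = 1 :=
    PowerSeries.inv_mul_cancel _ h0
  have := congrArg (PowerSeries.coeff c) h1
  rw [PowerSeries.coeff_mul, PowerSeries.coeff_one,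
    Finset.Nat.sum_antidiagonal_eq_sum_range_succ_mk] at this
  simpa [ginv, PowerSeries.coeff_mk] using this


lemma innerSumL (D : ℕ) (hD : 0 < D) (f : Fin D → ℂ) (c : ℕ) :
    ∑ j : Fin D, f j * (if j.val + c = D - 1 then 1 else 0)
      = if c ≤ D - 1 then fext D f (D - 1 - c) else 0 := by
  by_cases hc : c ≤ D - 1
  · have hlt : D - 1 - c < D := by omega
    rw [if_pos hc, Finset.sum_eq_single (⟨D - 1 - c, hlt⟩ : Fin D)]
    · have : (D - 1 - c) + c = D - 1 := by omega
      simp [fext, hlt, this]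
    · intro j _ hj
      have : ¬ (j.val + c = D - 1) := by
        intro h
        apply hj
        apply Fin.ext
        simp
        omega
      simp [this]
    · simp
  · rw [if_neg hc]
    apply Finset.sum_eq_zero
    intro j _
    have : ¬ (j.val + c = D - 1) := by omega
    simp [this]

lemma key_matrix (D : ℕ) (hD : 0 < D) (f : Fin D → ℂ) (hf : f ⟨0, hD⟩ ≠ 0)
    (z0 : Fin D) (s : ℕ) :
    ∑ k : Fin D, (if z0.val ≤ k.val then ginv D f (k.val - z0.val) else 0) *
        (∑ j : Fin D, f j * (if j.val + (k.val + s) = D - 1 then 1 else 0))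
      = if z0.val + s = D - 1 then 1 else 0 := by
  have hrw : ∀ k : Fin D,
      (if z0.val ≤ k.val then ginv D f (k.val - z0.val) else 0) *
        (∑ j : Fin D, f j * (if j.val + (k.val + s) = D - 1 then 1 else 0))
      = (if z0.val ≤ k.val then ginv D f (k.val - z0.val) else 0) *
        (if k.val + s ≤ D - 1 then fext D f (D - 1 - (k.val + s)) else 0) := by
    intro k; rw [innerSumL D hD]
  rw [Finset.sum_congr rfl (fun k _ => hrw k)]
  by_cases hs : s ≤ D - 1
  · set u := D - 1 - s with hu
    have hsum : ∀ k : Fin D,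
        (if z0.val ≤ k.val then ginv D f (k.val - z0.val) else 0) *
          (if k.val + s ≤ D - 1 then fext D f (D - 1 - (k.val + s)) else 0)
        = (if z0.val ≤ k.val ∧ k.val ≤ u then ginv D f (k.val - z0.val) * fext D f (u - k.val) else 0) := by
      intro k
      by_cases h1 : z0.val ≤ k.val <;> by_cases h2 : k.val ≤ u
      · have h3 : k.val + s ≤ D - 1 := by omega
        have he : D - 1 - (k.val + s) = u - k.val := by omega
        simp [h1, h2, h3, he]
      · have h3 : ¬ (k.val + s ≤ D - 1) := by omega
        simp [h1, h2, h3]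
      · simp [h1, h2]
      · simp [h1, h2]
    rw [Finset.sum_congr rfl (fun k _ => hsum k), Fin.sum_univ_eq_sum_range
      (fun k => if z0.val ≤ k ∧ k ≤ u then ginv D f (k - z0.val) * fext D f (u - k) else 0) D]
    have hsub : Finset.Icc z0.val u ⊆ Finset.range D := by
      intro x hx
      simp [Finset.mem_Icc, Finset.mem_range] at hx ⊢
      omega
    rw [← Finset.sum_subset hsub (fun x hx hnx => by
      rw [Finset.mem_Icc] at hnx
      rw [if_neg (fun hcon => hnx hcon)])]
    by_cases hz : z0.val ≤ u
    · have : ∀ x ∈ Finset.Icc z0.val u,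
          (if z0.val ≤ x ∧ x ≤ u then ginv D f (x - z0.val) * fext D f (u - x) else 0)
            = ginv D f (x - z0.val) * fext D f (u - x) := by
        intro x hx
        rw [Finset.mem_Icc] at hx
        rw [if_pos hx]
      rw [Finset.sum_congr rfl this]
      have hIcc : Finset.Icc z0.val u = Finset.Ico z0.val (u+1) := by
        rw [Finset.Ico_add_one_right_eq_Icc]
      rw [hIcc, Finset.sum_Ico_eq_sum_range]
      have hre : u + 1 - z0.val = (u - z0.val) + 1 := by omega
      rw [hre]
      have : ∀ i ∈ Finset.range ((u - z0.val) + 1),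
          ginv D f (z0.val + i - z0.val) * fext D f (u - (z0.val + i))
            = ginv D f i * fext D f ((u - z0.val) - i) := by
        intro i hi
        congr 1 <;> congr 1 <;> omega
      rw [Finset.sum_congr rfl this, conv D hD f hf]
      have : u - z0.val = 0 ↔ z0.val + s = D - 1 := by omega
      by_cases h : u - z0.val = 0
      · rw [if_pos h, if_pos (this.mp h)]
      · rw [if_neg h, if_neg (fun hc => h (this.mpr hc))]
    · rw [Finset.Icc_eq_empty (by omega), Finset.sum_empty]
      rw [if_neg (by omega)]
  · rw [if_neg (by omega)]
    apply Finset.sum_eq_zero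
    intro k _
    have h3 : ¬ (k.val + s ≤ D - 1) := by omega
    simp [h3]

noncomputable def Mmat (D : ℕ) (f : Fin D → ℂ) : Fin D → Fin D → ℂ :=
  fun l k => if l.val ≤ k.val then ginv D f (k.val - l.val) else 0

lemma key_matrix' (D : ℕ) (hD : 0 < D) (f : Fin D → ℂ) (hf : f ⟨0, hD⟩ ≠ 0)
    (z0 : Fin D) (s : ℕ) :
    ∑ k : Fin D, Mmat D f z0 k *
        (∑ j : Fin D, f j * (if j.val + (k.val + s) = D - 1 then 1 else 0))
      = if z0.val + s = D - 1 then 1 else 0 := by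
  simpa only [Mmat] using key_matrix D hD f hf z0 s


lemma sum3_comm {α β γ : Type*} [Fintype α] [Fintype β] [Fintype γ] (F : α → β → γ → ℂ) :
    ∑ k : α, ∑ j : β, ∑ p : γ, F k j p = ∑ p : γ, ∑ j : β, ∑ k : α, F k j p :=
  calc ∑ k : α, ∑ j : β, ∑ p : γ, F k j p
      = ∑ j : β, ∑ k : α, ∑ p : γ, F k j p := Finset.sum_comm
    _ = ∑ j : β, ∑ p : γ, ∑ k : α, F k j p :=
        Finset.sum_congr rfl fun j _ => Finset.sum_comm
    _ = ∑ p : γ, ∑ j : β, ∑ k : α, F k j p := Finset.sum_comm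


lemma keyL : ∀ n D r : ℕ, 2 ≤ D →
    ∀ v : Fin r → Fin (n+1) → Fin D → ℂ,
    (∀ x : Fin (n+1) → Fin D, Lfun D (n+1) x = ∑ p, ∏ i, v p i (x i)) →
    n * (D-1) + 1 ≤ r := by
  intro n
  induction n with
  | zero =>
    intro D r hD v hv
    simp only [Nat.zero_mul, Nat.zero_add]
    by_contra h
    have hr : r = 0 := by omega
    subst hr
    have := hv (fun _ => ⟨D - 1, by omega⟩)
    simp [Lfun] at this
  | succ n ih =>
    intro D r hD v hv
    have hD0 : 0 < D := by omega
    set a : Fin r → (Fin D → ℂ) := fun p => v p 0 with ha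
    -- Step A : conciseness in the first factor
    have hsingle : ∀ l : Fin D,
        (Pi.single l (1:ℂ) : Fin D → ℂ) ∈ Submodule.span ℂ (Set.range a) := by
      intro l
      set y : Fin (n+1) → Fin D :=
        (Fin.cons ⟨D-1-l.val, by omega⟩ (fun _ => ⟨0, hD0⟩) : Fin (n+1) → Fin D) with hy
      have hsum : ∀ j : Fin D,
          (∑ i : Fin (n+2), (((Fin.cons j y : Fin (n+2) → Fin D)) i).val) = j.val + (D-1-l.val) := by
        intro j
        rw [Fin.sum_univ_succ]
        simp [hy, Fin.sum_univ_succ]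
      have heq : (Pi.single l (1:ℂ) : Fin D → ℂ)
          = ∑ p, (∏ i : Fin (n+1), v p i.succ (y i)) • a p := by
        funext j
        have h1 : Lfun D (n+2) (Fin.cons j y) = (Pi.single l (1:ℂ) : Fin D → ℂ) j := by
          unfold Lfun
          rw [hsum j]
          by_cases h : j = l
          · subst h
            rw [if_pos (by omega), Pi.single_eq_same]
          · have : ¬ (j.val + (D-1-l.val) = D - 1) := by
              intro hc
              exact h (Fin.ext (by omega))
            rw [if_neg this, Pi.single_eq_of_ne h]
        rw [← h1, hv (Fin.cons j y)]
        rw [Finset.sum_apply]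
        refine Finset.sum_congr rfl fun p _ => ?_
        rw [Fin.prod_univ_succ]
        simp only [Fin.cons_zero, Fin.cons_succ, Pi.smul_apply, smul_eq_mul]
        ring
      rw [heq]
      exact Submodule.sum_mem _ fun p _ =>
        Submodule.smul_mem _ _ (Submodule.subset_span ⟨p, rfl⟩)
    have hspan : Submodule.span ℂ (Set.range a) = ⊤ := by
      rw [eq_top_iff]
      intro x _
      have hx : x = ∑ j : Fin D, x j • (Pi.single j (1:ℂ) : Fin D → ℂ) := by
        funext i
        simp [Pi.single_apply]
      rw [hx]
      exact Submodule.sum_mem _ fun j _ => Submodule.smul_mem _ _ (hsingle j)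
    -- Step B : basis extraction and covector
    obtain ⟨t, hts, hsp, hli⟩ := exists_linearIndependent ℂ (Set.range a)
    have hspt : Submodule.span ℂ t = ⊤ := by rw [hsp, hspan]
    have htfin : t.Finite := hli.setFinite
    haveI : Fintype t := htfin.fintype
    let b : Module.Basis t ℂ (Fin D → ℂ) := Module.Basis.mk hli (by rw [Subtype.range_coe]; exact hspt.ge)
    have hcard : Fintype.card t = D := by
      rw [← Module.finrank_eq_card_basis b]
      simp [Module.finrank_pi]
    have he0 : (Pi.single (⟨0, hD0⟩ : Fin D) (1:ℂ) : Fin D → ℂ) ≠ 0 := by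
      intro h
      have := congrFun h ⟨0, hD0⟩
      simp at this
    obtain ⟨i0, hi0⟩ : ∃ i, b.repr ((Pi.single (⟨0, hD0⟩ : Fin D) (1:ℂ) : Fin D → ℂ)) i ≠ 0 := by
      by_contra h
      push_neg at h
      apply he0
      have : b.repr ((Pi.single (⟨0, hD0⟩ : Fin D) (1:ℂ) : Fin D → ℂ)) = 0 := Finsupp.ext h
      have := congrArg b.repr.symm this
      simpa using this
    set f : Fin D → ℂ := fun j => b.repr (Pi.single j (1:ℂ) : Fin D → ℂ) i0 with hfdef
    have hlin : ∀ w : Fin D → ℂ, ∑ j, f j * w j = b.repr w i0 := by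
      intro w
      have hw : w = ∑ j : Fin D, w j • (Pi.single j (1:ℂ) : Fin D → ℂ) := by
        funext i
        simp [Pi.single_apply]
      conv_rhs => rw [hw]
      rw [map_sum]
      rw [Finsupp.finset_sum_apply]
      refine Finset.sum_congr rfl fun j _ => ?_
      rw [map_smul]
      simp [hfdef, mul_comm]
    have hf0 : f ⟨0, hD0⟩ ≠ 0 := hi0
    have hchoice : ∀ i : t, ∃ p : Fin r, a p = (i : Fin D → ℂ) := fun i => hts i.2
    choose pf hpf using hchoice
    have hinj : Function.Injective pf := by
      intro i i' h
      apply Subtype.ext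
      rw [← hpf i, ← hpf i', h]
    set K : Finset (Fin r) := Finset.image pf (Finset.univ.erase i0) with hK
    have hKcard : K.card = D - 1 := by
      rw [hK, Finset.card_image_of_injective _ hinj,
        Finset.card_erase_of_mem (Finset.mem_univ _), Finset.card_univ, hcard]
    have hKzero : ∀ p ∈ K, ∑ j, f j * a p j = 0 := by
      intro p hp
      obtain ⟨i, hi, rfl⟩ := Finset.mem_image.mp hp
      rw [hlin, hpf i]
      have hbi : (i : Fin D → ℂ) = b i := (Module.Basis.mk_apply hli _ i).symm
      rw [hbi, Module.Basis.repr_self]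
      exact Finsupp.single_eq_of_ne (Finset.ne_of_mem_erase hi).symm
    -- Step C : contraction and repair
    set c : Fin r → ℂ := fun p => ∑ j, f j * a p j with hc
    set u : Fin r → Fin (n+1) → Fin D → ℂ :=
      fun p => (Fin.cons (fun l => c p * ∑ k, Mmat D f l k * v p 1 k)
        (fun i => v p i.succ.succ) : Fin (n+1) → Fin D → ℂ) with hu
    have H1 : ∀ z : Fin (n+1) → Fin D,
        Lfun D (n+1) z = ∑ p, ∏ i, u p i (z i) := by
      intro z
      set s : ℕ := ∑ i : Fin n, (z i.succ).val with hs
      set P : Fin r → ℂ := fun p => ∏ i : Fin n, v p i.succ.succ (z i.succ) with hP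
      have hE : ∀ (j k : Fin D),
          (if j.val + (k.val + s) = D - 1 then (1:ℂ) else 0)
            = ∑ p, v p 0 j * (v p 1 k * P p) := by
        intro j k
        have hsum2 : ∑ i : Fin (n+2),
            (((Fin.cons j (Fin.cons k (Fin.tail z)) : Fin (n+2) → Fin D)) i).val
              = j.val + (k.val + s) := by
          rw [Fin.sum_univ_succ]
          simp [Fin.sum_univ_succ, hs, Fin.tail]
        have h2 : Lfun D (n+2) (Fin.cons j (Fin.cons k (Fin.tail z)))
            = if j.val + (k.val + s) = D - 1 then (1:ℂ) else 0 := by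
          unfold Lfun
          rw [hsum2]
        rw [← h2, hv]
        refine Finset.sum_congr rfl fun p _ => ?_
        rw [Fin.prod_univ_succ, Fin.prod_univ_succ]
        simp [hP, Fin.tail, Fin.succ_zero_eq_one]
      calc Lfun D (n+1) z
          = if (z 0).val + s = D - 1 then (1:ℂ) else 0 := by
            unfold Lfun
            rw [Fin.sum_univ_succ]
        _ = ∑ k : Fin D, Mmat D f (z 0) k *
              (∑ j : Fin D, f j * (if j.val + (k.val + s) = D-1 then 1 else 0)) :=
            (key_matrix' D hD0 f hf0 (z 0) s).symm
        _ = ∑ k : Fin D, Mmat D f (z 0) k *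
              (∑ j : Fin D, f j * (∑ p, v p 0 j * (v p 1 k * P p))) := by
            refine Finset.sum_congr rfl fun k _ => ?_
            congr 1
            refine Finset.sum_congr rfl fun j _ => ?_
            rw [hE j k]
        _ = ∑ k : Fin D, ∑ j : Fin D, ∑ p,
              Mmat D f (z 0) k * (f j * (v p 0 j * (v p 1 k * P p))) := by
            simp only [Finset.mul_sum]
        _ = ∑ p, ∑ j : Fin D, ∑ k : Fin D,
              Mmat D f (z 0) k * (f j * (v p 0 j * (v p 1 k * P p))) := sum3_comm _
        _ = ∑ p, (c p * ∑ k, Mmat D f (z 0) k * v p 1 k) * P p := by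
            refine Finset.sum_congr rfl fun p _ => ?_
            simp only [hc, ha, Finset.sum_mul, Finset.mul_sum]
            rw [Finset.sum_comm]
            refine Finset.sum_congr rfl fun j _ => ?_
            refine Finset.sum_congr rfl fun k _ => ?_
            ring
        _ = ∑ p, ∏ i, u p i (z i) := by
            refine Finset.sum_congr rfl fun p _ => ?_
            rw [Fin.prod_univ_succ]
            simp only [hu, hP, Fin.cons_zero, Fin.cons_succ]
    -- Step D : kill K terms and reindex
    have hzero : ∀ p ∈ K, ∀ z : Fin (n+1) → Fin D, ∏ i, u p i (z i) = 0 := by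
      intro p hp z
      apply Finset.prod_eq_zero (Finset.mem_univ 0)
      simp only [hu, Fin.cons_zero]
      rw [show c p = 0 from hKzero p hp, zero_mul]
    set s' : Finset (Fin r) := Finset.univ \ K with hs'
    have hm : s'.card = r - (D-1) := by
      rw [hs', Finset.card_sdiff_of_subset (Finset.subset_univ K), Finset.card_univ,
        Fintype.card_fin, hKcard]
    have H2 : ∀ z : Fin (n+1) → Fin D,
        Lfun D (n+1) z = ∑ p ∈ s', ∏ i, u p i (z i) := by
      intro z
      rw [H1 z]
      refine (Finset.sum_subset (Finset.sdiff_subset) fun p _ hpn => ?_).symm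
      have hpk : p ∈ K := by
        by_contra hk
        exact hpn (Finset.mem_sdiff.mpr ⟨Finset.mem_univ p, hk⟩)
      exact hzero p hpk z
    have H3 : ∀ z : Fin (n+1) → Fin D,
        Lfun D (n+1) z = ∑ q : Fin s'.card, ∏ i, u (s'.equivFin.symm q).val i (z i) := by
      intro z
      rw [H2 z, ← Finset.sum_attach s' (fun p => ∏ i, u p i (z i))]
      exact (Equiv.sum_comp s'.equivFin.symm (fun x => ∏ i, u x.val i (z i))).symm
    have hih := ih D s'.card hD (fun q i l => u (s'.equivFin.symm q).val i l) H3
    have hDr : D - 1 ≤ r := by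
      have := Finset.card_le_univ K
      rw [Fintype.card_fin] at this
      omega
    have hmul : (n+1)*(D-1) = n*(D-1) + (D-1) := by ring
    rw [hmul]
    omega

lemma upperL (n D : ℕ) (hn : 2 ≤ n) (hD : 2 ≤ D) :
    ∃ v : Fin ((n-1)*(D-1)+1) → Fin n → Fin D → ℂ,
      ∀ x, Lfun D n x = ∑ p, ∏ i, v p i (x i) := by
  obtain ⟨m, rfl⟩ : ∃ m, n = m + 2 := ⟨n - 2, by omega⟩
  set N : ℕ := (m + 2 - 1) * (D - 1) + 1 with hNdef
  have hN0 : N ≠ 0 := by omega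
  set t : ℂ := zeta N with htdef
  have ht : IsPrimitiveRoot t N := by
    rw [htdef]
    unfold zeta
    exact Complex.isPrimitiveRoot_exp N hN0
  have htne : t ≠ 0 := by
    rw [htdef]
    unfold zeta
    exact Complex.exp_ne_zero _
  have htN : t ^ N = 1 := ht.pow_eq_one
  have hND : D ≤ N := by
    have h1 : 1 * (D-1) ≤ (m + 2 - 1) * (D-1) := Nat.mul_le_mul_right _ (by omega)
    omega
  have hNn : (m + 2) * (D - 1) = N - 1 + (D - 1) := by
    have hNN : N - 1 = (m + 1) * (D - 1) := by rw [hNdef]; show (m+1)*(D-1)+1-1 = (m+1)*(D-1); omega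
    rw [hNN]
    ring
  refine ⟨fun p i j => (if i = 0 then ((N:ℂ))⁻¹ * (t ^ ((p:ℕ) * (D-1)))⁻¹ else 1)
    * t ^ ((p:ℕ) * (j:ℕ)), fun x => ?_⟩
  show Lfun D (m+2) x = ∑ p : Fin N, ∏ i : Fin (m+2),
    ((if i = 0 then ((N:ℂ))⁻¹ * (t ^ ((p:ℕ) * (D-1)))⁻¹ else 1) * t ^ ((p:ℕ) * ((x i : ℕ))))
  set S : ℕ := ∑ i, (x i).val with hS
  have hSle : S ≤ (m + 2) * (D - 1) := by
    rw [hS]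
    calc ∑ i, (x i).val ≤ ∑ _i : Fin (m+2), (D - 1) :=
          Finset.sum_le_sum (fun i _ => by have := (x i).isLt; omega)
      _ = (m+2) * (D-1) := by
          rw [Finset.sum_const, Finset.card_univ, Fintype.card_fin, smul_eq_mul]
  have hterm : ∀ p : Fin N, ∏ i : Fin (m+2),
      ((if i = 0 then ((N:ℂ))⁻¹ * (t ^ ((p:ℕ) * (D-1)))⁻¹ else 1)
      * t ^ ((p:ℕ) * ((x i :ℕ)))) = (N:ℂ)⁻¹ * (t ^ S * (t ^ (D-1))⁻¹) ^ (p:ℕ) := by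
    intro p
    rw [Finset.prod_mul_distrib]
    have h1 : ∏ i : Fin (m+2), (if i = 0 then ((N:ℂ))⁻¹ * (t ^ ((p:ℕ) * (D-1)))⁻¹ else 1)
        = (N:ℂ)⁻¹ * (t ^ ((p:ℕ) * (D-1)))⁻¹ := by
      rw [Finset.prod_ite_eq' Finset.univ (0 : Fin (m+2))
        (fun _ => ((N:ℂ))⁻¹ * (t ^ ((p:ℕ) * (D-1)))⁻¹)]
      simp
    have h2 : ∏ i : Fin (m+2), t ^ ((p:ℕ) * ((x i : ℕ))) = t ^ ((p:ℕ) * S) := by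
      rw [Finset.prod_pow_eq_pow_sum, ← Finset.mul_sum]
    rw [h1, h2]
    rw [mul_pow, inv_pow, ← pow_mul, ← pow_mul]
    ring_nf
  rw [Finset.sum_congr rfl (fun p _ => hterm p), ← Finset.mul_sum]
  set w : ℂ := t ^ S * (t ^ (D-1))⁻¹ with hw
  rw [Fin.sum_univ_eq_sum_range (fun p => w ^ p) N]
  by_cases hcase : S = D - 1
  · have hw1 : w = 1 := by
      rw [hw, hcase]
      exact mul_inv_cancel₀ (pow_ne_zero _ htne)
    rw [hw1]
    simp [Lfun, ← hS, hcase]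
  · have hwN : w ^ N = 1 := by
      rw [hw, mul_pow, inv_pow, ← pow_mul, ← pow_mul,
        mul_comm S N, mul_comm (D-1) N, pow_mul, pow_mul, htN, one_pow, one_pow]
      simp
    have hw1 : w ≠ 1 := by
      intro hcon
      have h3 : t ^ S = t ^ (D-1) := by
        have := mul_inv_eq_one₀ (pow_ne_zero (D-1) htne) |>.mp hcon
        exact this
      by_cases hord : D - 1 ≤ S
      · have h4 : t ^ (S - (D-1)) * t ^ (D-1) = t ^ (D-1) := by
          rw [← pow_add]
          have he : S - (D-1) + (D-1) = S := by omega
          rw [he, h3]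
        have h5 : t ^ (S - (D-1)) = 1 :=
          mul_right_cancel₀ (pow_ne_zero (D-1) htne) (h4.trans (one_mul _).symm)
        have h6 : N ∣ S - (D-1) := ht.dvd_of_pow_eq_one _ h5
        have h7 : 0 < S - (D-1) := by omega
        have h8 : N ≤ S - (D-1) := Nat.le_of_dvd h7 h6
        omega
      · have h4 : t ^ (D - 1 - S) * t ^ S = t ^ S := by
          rw [← pow_add]
          have he : D - 1 - S + S = D - 1 := by omega
          rw [he, h3]
        have h5 : t ^ (D - 1 - S) = 1 :=
          mul_right_cancel₀ (pow_ne_zero S htne) (h4.trans (one_mul _).symm)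
        have h6 : N ∣ D - 1 - S := ht.dvd_of_pow_eq_one _ h5
        have h8 : N ≤ D - 1 - S := Nat.le_of_dvd (by omega) h6
        omega
    rw [geom_sum_eq hw1, hwN]
    simp [Lfun, ← hS, hcase]

theorem rank_L (n D : ℕ) (hn : 2 ≤ n) (hD : 2 ≤ D) :
    tensorRank (Lfun D n) = (n - 1) * (D - 1) + 1 := by
  unfold tensorRank
  apply le_antisymm
  · obtain ⟨v, hv⟩ := upperL n D hn hD
    exact Nat.sInf_le ⟨v, hv⟩
  · apply le_csInf
    · obtain ⟨v, hv⟩ := upperL n D hn hD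
      exact ⟨_, v, hv⟩
    · rintro r ⟨v, hv⟩
      obtain ⟨m, rfl⟩ : ∃ m, n = m + 2 := ⟨n - 2, by omega⟩
      have := keyL (m+1) D r hD v hv
      simpa using this
end

section
/- For r = (n-1)(d-1)+1 and ζ = exp(2πi/r) a primitive r-th root of unity, the identity L(d,n) = (1/r) Σ_{p=0}^{r-1} ζ^{p(1-d)} (Σ_{j=0}^{d-1} ζ^{pj} |j⟩)^⊗n holds; hence rk(L(d,n)) ≤ (n-1)(d-1)+1. -/
open scoped BigOperators

lemma zeta_prim (r : ℕ) (hr : r ≠ 0) : IsPrimitiveRoot (zeta r) r := by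
  simpa [zeta] using Complex.isPrimitiveRoot_exp r hr

lemma zeta_ne_zero (r : ℕ) : zeta r ≠ 0 := Complex.exp_ne_zero _

lemma key_sum (r : ℕ) (hr : r ≠ 0) (m : ℤ) :
    ∑ p : Fin r, (zeta r) ^ ((p.val : ℤ) * m) = if (r : ℤ) ∣ m then (r : ℂ) else 0 := by
  have hprim := zeta_prim r hr
  have hrw : ∀ p : Fin r, (zeta r) ^ ((p.val : ℤ) * m) = (zeta r ^ m) ^ (p.val : ℕ) := by
    intro p
    rw [mul_comm, zpow_mul, zpow_natCast]
  simp only [hrw]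
  by_cases h : (r : ℤ) ∣ m
  · have h1 : zeta r ^ m = 1 := (hprim.zpow_eq_one_iff_dvd m).mpr h
    simp [h1, h]
  · have h1 : zeta r ^ m ≠ 1 := fun he => h ((hprim.zpow_eq_one_iff_dvd m).mp he)
    rw [Fin.sum_univ_eq_sum_range (fun i => (zeta r ^ m) ^ i), geom_sum_eq h1]
    have : (zeta r ^ m) ^ r = 1 := by
      rw [← zpow_natCast, ← zpow_mul, mul_comm, zpow_mul, zpow_natCast, hprim.pow_eq_one, one_zpow]
    simp [this, h]

theorem L_decomposition (n D : ℕ) (hn : 2 ≤ n) (hD : 2 ≤ D) :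
    (∀ x : Fin n → Fin D,
      Lfun D n x = (1 / (((n - 1) * (D - 1) + 1 : ℕ) : ℂ)) *
        ∑ p : Fin ((n - 1) * (D - 1) + 1),
          zeta ((n - 1) * (D - 1) + 1) ^ ((p.val : ℤ) * (1 - (D : ℤ))) *
          ∏ i, zeta ((n - 1) * (D - 1) + 1) ^ (p.val * (x i).val)) ∧
    tensorRank (Lfun D n) ≤ (n - 1) * (D - 1) + 1 := by
  set r : ℕ := (n - 1) * (D - 1) + 1 with hr_def
  have hr0 : r ≠ 0 := Nat.succ_ne_zero _
  have hrC : ((r : ℕ) : ℂ) ≠ 0 := Nat.cast_ne_zero.mpr hr0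
  have hnD : n * (D - 1) = (n - 1) * (D - 1) + (D - 1) := by
    rcases Nat.exists_eq_add_of_le hn with ⟨k, rfl⟩
    simp only [Nat.add_sub_cancel_left, show 2 + k - 1 = k + 1 by omega]
    ring
  have h1 : ∀ x : Fin n → Fin D,
      Lfun D n x = (1 / ((r : ℕ) : ℂ)) *
        ∑ p : Fin r, zeta r ^ ((p.val : ℤ) * (1 - (D : ℤ))) *
          ∏ i, zeta r ^ (p.val * (x i).val) := by
    intro x
    set s : ℕ := ∑ i, (x i).val with hs_def
    have hsle : s ≤ n * (D - 1) := by
      calc s ≤ ∑ _i : Fin n, (D - 1) :=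
              Finset.sum_le_sum (fun i _ => by have := (x i).isLt; omega)
        _ = n * (D - 1) := by simp [mul_comm]
    have hterm : ∀ p : Fin r,
        zeta r ^ ((p.val : ℤ) * (1 - (D : ℤ))) * ∏ i, zeta r ^ (p.val * (x i).val)
          = zeta r ^ ((p.val : ℤ) * ((s : ℤ) + 1 - D)) := by
      intro p
      rw [Finset.prod_pow_eq_pow_sum, ← Finset.mul_sum, ← hs_def,
        ← zpow_natCast (zeta r) (p.val * s), ← zpow_add₀ (zeta_ne_zero r)]
      congr 1
      push_cast
      ring
    rw [Finset.sum_congr rfl (fun p _ => hterm p), key_sum r hr0]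
    have hdvd : (r : ℤ) ∣ ((s : ℤ) + 1 - D) ↔ s = D - 1 := by
      constructor
      · intro h
        have hz : ((s : ℤ) + 1 - D) = 0 := by
          refine Int.eq_zero_of_dvd_of_natAbs_lt_natAbs h ?_
          have hDle : (D - 1) ≤ (n - 1) * (D - 1) :=
            Nat.le_mul_of_pos_left _ (by omega)
          have h1 : ((s : ℤ) + 1 - D).natAbs < (n - 1) * (D - 1) + 1 := by omega
          exact h1
        omega
      · intro h
        have : ((s : ℤ) + 1 - D) = 0 := by omega
        simp [this]
    by_cases hs : s = D - 1
    · simp [Lfun, ← hs_def, hs, hdvd, hrC]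
      rw [← hs]; exact hdvd.mpr hs
    · simp [Lfun, ← hs_def, hs, hdvd]
  refine ⟨h1, ?_⟩
  haveI : NeZero n := ⟨by omega⟩
  apply Nat.sInf_le
  refine ⟨fun p i j =>
    (if i = (0 : Fin n) then (1 / ((r : ℕ) : ℂ)) * zeta r ^ ((p.val : ℤ) * (1 - (D : ℤ))) else 1)
      * zeta r ^ (p.val * j.val), fun x => ?_⟩
  rw [h1 x, Finset.mul_sum]
  refine Finset.sum_congr rfl (fun p _ => ?_)
  rw [Finset.prod_mul_distrib, Finset.prod_ite_eq' Finset.univ (0 : Fin n)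
    (fun _ => (1 / ((r : ℕ) : ℂ)) * zeta r ^ ((p.val : ℤ) * (1 - (D : ℤ))))]
  simp [mul_assoc]
end

section
/- The border rank of the n-qudit L state L(d,n) = Σ_{j1+...+jn = d-1} |j1...jn⟩ equals d; explicitly, L(d,n) = lim_{ε→0} (1/(d ε^{d-1})) Σ_{p=0}^{d-1} ξ^p (Σ_{j=0}^{d-1} ε^j ξ^{pj} |j⟩)^⊗n where ξ = exp(2πi/d), so L(d,n) is a limit of tensors of rank d, and its border rank is at least d by 1-conciseness. -/
open scoped BigOperators

lemma zeta_pow_self {D : ℕ} (hD : D ≠ 0) : zeta D ^ D = 1 :=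
  (Complex.isPrimitiveRoot_exp D hD).pow_eq_one

lemma zeta_geom_sum {D : ℕ} (hD : D ≠ 0) (k : ℕ) :
    ∑ p : Fin D, (zeta D ^ k) ^ p.val = if D ∣ k then (D : ℂ) else 0 := by
  have hprim := Complex.isPrimitiveRoot_exp D hD
  rw [Fin.sum_univ_eq_sum_range (fun p => (zeta D ^ k) ^ p) D]
  by_cases h : D ∣ k
  · have h1 : zeta D ^ k = 1 := (hprim.pow_eq_one_iff_dvd k).2 h
    simp [h1, h]
  · have hne : zeta D ^ k ≠ 1 := fun hh => h ((hprim.pow_eq_one_iff_dvd k).1 hh)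
    rw [geom_sum_eq hne]
    have h2 : (zeta D ^ k) ^ D = 1 := by
      rw [← pow_mul, mul_comm, pow_mul, zeta_pow_self hD, one_pow]
    simp [h2, h]

lemma Gval {n D : ℕ} (hD : 2 ≤ D) {ε : ℂ} (hε : ε ≠ 0) (x : Fin n → Fin D) :
    (1 / ((D : ℂ) * ε ^ (D - 1))) * ∑ p : Fin D,
        zeta D ^ p.val * ∏ i, (ε ^ (x i).val * zeta D ^ (p.val * (x i).val))
      = if D ∣ (∑ i, (x i).val) + 1 then ε ^ ((∑ i, (x i).val) - (D - 1)) else 0 := by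
  have hD0 : (D : ℂ) ≠ 0 := Nat.cast_ne_zero.2 (by omega)
  have hεp : ε ^ (D - 1) ≠ 0 := pow_ne_zero _ hε
  set S := ∑ i, (x i).val with hS
  have hterm : ∀ p : Fin D,
      zeta D ^ p.val * ∏ i, (ε ^ (x i).val * zeta D ^ (p.val * (x i).val))
        = ε ^ S * (zeta D ^ (S + 1)) ^ p.val := by
    intro p
    have h1 : ∏ i, (ε ^ (x i).val * zeta D ^ (p.val * (x i).val))
        = ε ^ S * zeta D ^ (p.val * S) := by
      rw [Finset.prod_mul_distrib, Finset.prod_pow_eq_pow_sum,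
        Finset.prod_pow_eq_pow_sum, ← hS, ← Finset.mul_sum, ← hS]
    rw [h1, mul_comm p.val S, ← pow_mul, add_mul, one_mul, pow_add]
    ring
  rw [Finset.sum_congr rfl (fun p _ => hterm p), ← Finset.mul_sum,
    zeta_geom_sum (by omega : D ≠ 0) (S + 1)]
  by_cases h : D ∣ S + 1
  · rw [if_pos h, if_pos h]
    have hge : D - 1 ≤ S := by
      obtain ⟨c, hc⟩ := h
      have hc0 : c ≠ 0 := by rintro rfl; omega
      have := Nat.le_mul_of_pos_right D (Nat.pos_of_ne_zero hc0)
      omega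
    have : ε ^ S = ε ^ (S - (D - 1)) * ε ^ (D - 1) := by
      rw [← pow_add]; congr 1; omega
    rw [this]
    field_simp
  · rw [if_neg h, if_neg h, mul_zero, mul_zero]

lemma L_tendsto (n D : ℕ) (hD : 2 ≤ D) :
    Filter.Tendsto
      (fun ε : ℂ => fun x : Fin n → Fin D =>
        (1 / ((D : ℂ) * ε ^ (D - 1))) * ∑ p : Fin D,
          zeta D ^ p.val * ∏ i, (ε ^ (x i).val * zeta D ^ (p.val * (x i).val)))
      (nhdsWithin 0 {(0 : ℂ)}ᶜ) (nhds (Lfun D n)) := by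
  rw [tendsto_pi_nhds]
  intro x
  set S := ∑ i, (x i).val with hS
  have hev : (fun ε : ℂ => if D ∣ S + 1 then ε ^ (S - (D - 1)) else 0)
      =ᶠ[nhdsWithin 0 {(0 : ℂ)}ᶜ]
      (fun ε : ℂ => (1 / ((D : ℂ) * ε ^ (D - 1))) * ∑ p : Fin D,
        zeta D ^ p.val * ∏ i, (ε ^ (x i).val * zeta D ^ (p.val * (x i).val))) := by
    filter_upwards [self_mem_nhdsWithin] with ε hε
    exact (Gval hD hε x).symm
  refine Filter.Tendsto.congr' hev ?_
  by_cases hdvd : D ∣ S + 1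
  · by_cases hSeq : S = D - 1
    · have ht : S - (D - 1) = 0 := by omega
      have hL : Lfun D n x = 1 := by simp [Lfun, ← hS, hSeq]
      simp only [if_pos hdvd, ht, pow_zero, hL]
      exact tendsto_const_nhds
    · have ht : S - (D - 1) ≠ 0 := by
        obtain ⟨c, hc⟩ := hdvd
        have hc0 : c ≠ 0 := by rintro rfl; omega
        have := Nat.le_mul_of_pos_right D (Nat.pos_of_ne_zero hc0)
        omega
      have hL : Lfun D n x = 0 := by simp [Lfun, ← hS, hSeq]
      simp only [if_pos hdvd, hL]
      have : Filter.Tendsto (fun ε : ℂ => ε ^ (S - (D - 1))) (nhds 0)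
          (nhds ((0 : ℂ) ^ (S - (D - 1)))) := (continuous_pow _).tendsto 0
      rw [zero_pow ht] at this
      exact this.mono_left nhdsWithin_le_nhds
  · have hSeq : S ≠ D - 1 := fun h => hdvd ⟨1, by omega⟩
    have hL : Lfun D n x = 0 := by simp [Lfun, ← hS, hSeq]
    simp only [if_neg hdvd, hL]
    exact tendsto_const_nhds

lemma rank_le_D {n D : ℕ} (hn : 2 ≤ n) (hD : 2 ≤ D) (ε : ℂ) :
    tensorRank (fun x : Fin n → Fin D =>
      (1 / ((D : ℂ) * ε ^ (D - 1))) * ∑ p : Fin D,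
        zeta D ^ p.val * ∏ i, (ε ^ (x i).val * zeta D ^ (p.val * (x i).val))) ≤ D := by
  apply Nat.sInf_le
  refine ⟨fun p i j => (if i = (⟨0, by omega⟩ : Fin n) then
      (1 / ((D : ℂ) * ε ^ (D - 1))) * zeta D ^ p.val else 1)
      * (ε ^ j.val * zeta D ^ (p.val * j.val)), fun x => ?_⟩
  dsimp only
  rw [Finset.mul_sum]
  refine Finset.sum_congr rfl fun p _ => ?_
  have hprod : ∏ i : Fin n, ((if i = (⟨0, by omega⟩ : Fin n) then
      (1 / ((D : ℂ) * ε ^ (D - 1))) * zeta D ^ p.val else 1)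
      * (ε ^ (x i).val * zeta D ^ (p.val * (x i).val)))
      = ((1 / ((D : ℂ) * ε ^ (D - 1))) * zeta D ^ p.val)
        * ∏ i : Fin n, (ε ^ (x i).val * zeta D ^ (p.val * (x i).val)) := by
    rw [Finset.prod_mul_distrib, Finset.prod_ite_eq' Finset.univ (⟨0, by omega⟩ : Fin n)
      (fun _ => (1 / ((D : ℂ) * ε ^ (D - 1))) * zeta D ^ p.val)]
    simp only [Finset.mem_univ, if_pos]
  rw [hprod]
  ring

lemma rank_set_nonempty {n D : ℕ} (hn : 1 ≤ n) (T : (Fin n → Fin D) → ℂ) :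
    {r | ∃ v : Fin r → (i : Fin n) → Fin D → ℂ,
      ∀ x, T x = ∑ p, ∏ i, v p i (x i)}.Nonempty := by
  classical
  set N := Fintype.card (Fin n → Fin D) with hN
  set e : Fin N ≃ (Fin n → Fin D) := (Fintype.equivFin _).symm with he
  refine ⟨N, fun p i j => (if e p i = j then 1 else 0) *
    (if i = (⟨0, by omega⟩ : Fin n) then T (e p) else 1), fun x => ?_⟩
  have hterm : ∀ p : Fin N, (∏ i, (if e p i = x i then (1:ℂ) else 0) *
      (if i = (⟨0, by omega⟩ : Fin n) then T (e p) else 1))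
      = if e p = x then T (e p) else 0 := by
    intro p
    rw [Finset.prod_mul_distrib, Finset.prod_boole,
      Finset.prod_ite_eq' Finset.univ (⟨0, by omega⟩ : Fin n) (fun _ => T (e p))]
    simp only [Finset.mem_univ, if_pos]
    by_cases h : e p = x
    · simp [h, funext_iff.1 h]
    · have h2 : ¬ ∀ i, e p i = x i := fun hh => h (funext hh)
      simp [h, h2]
  rw [Finset.sum_congr rfl (fun p _ => hterm p),
    Fintype.sum_eq_single (e.symm x) (fun p hp => by
      rw [if_neg]
      exact fun hh => hp (by rw [← hh, Equiv.symm_apply_apply])),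
    Equiv.apply_symm_apply, if_pos rfl]

lemma sum_dite_lt {D r : ℕ} (hr : r ≤ D) (g : Fin r → ℂ) :
    ∑ p : Fin D, (if h : p.val < r then g ⟨p.val, h⟩ else 0) = ∑ q : Fin r, g q := by
  rw [Fin.sum_univ_eq_sum_range (fun m => if h : m < r then g ⟨m, h⟩ else 0) D]
  rw [← Finset.sum_subset (Finset.range_subset_range.2 hr)
    (fun m _ hm => dif_neg (by simpa using hm))]
  rw [← Fin.sum_univ_eq_sum_range (fun m => if h : m < r then g ⟨m, h⟩ else 0) r]
  exact Finset.sum_congr rfl fun q _ => by rw [dif_pos q.isLt]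

lemma det_sum_mul {D r : ℕ} (hr : r < D) (B : Fin D → Fin r → ℂ) (C : Fin r → Fin D → ℂ) :
    Matrix.det (Matrix.of fun j k : Fin D => ∑ p : Fin r, B j p * C p k) = 0 := by
  have hfac : Matrix.of (fun j k : Fin D => ∑ p : Fin r, B j p * C p k)
      = (Matrix.of fun j (p : Fin D) => if h : p.val < r then B j ⟨p.val, h⟩ else 0)
        * (Matrix.of fun (p : Fin D) k => if h : p.val < r then C ⟨p.val, h⟩ k else 0) := by
    ext j k
    simp only [Matrix.mul_apply, Matrix.of_apply]
    rw [← sum_dite_lt hr.le (fun q => B j q * C q k)]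
    refine Finset.sum_congr rfl fun p _ => ?_
    by_cases h : p.val < r
    · simp [h]
    · simp [h]
  rw [hfac, Matrix.det_mul,
    Matrix.det_eq_zero_of_column_eq_zero (⟨r, hr⟩ : Fin D) (fun j => dif_neg (lt_irrefl r)),
    zero_mul]

noncomputable def minorM {n D : ℕ} (hn : 2 ≤ n) (hD : 2 ≤ D)
    (T : (Fin n → Fin D) → ℂ) : ℂ :=
  Matrix.det (Matrix.of fun j k : Fin D =>
    T (fun i => if i.val = 0 then j else if i.val = 1 then ⟨D - 1 - k.val, by omega⟩
      else ⟨0, by omega⟩))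

lemma minorM_continuous {n D : ℕ} (hn : 2 ≤ n) (hD : 2 ≤ D) :
    Continuous fun T : (Fin n → Fin D) → ℂ => minorM hn hD T := by
  apply Continuous.matrix_det
  exact continuous_pi fun j => continuous_pi fun k => continuous_apply _

lemma minorM_Lfun {n D : ℕ} (hn : 2 ≤ n) (hD : 2 ≤ D) :
    minorM hn hD (Lfun D n) = 1 := by
  unfold minorM
  have hmat : (Matrix.of fun j k : Fin D =>
      Lfun D n (fun i => if i.val = 0 then j else if i.val = 1 then ⟨D - 1 - k.val, by omega⟩
        else ⟨0, by omega⟩)) = (1 : Matrix (Fin D) (Fin D) ℂ) := by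
    ext j k
    have hsum : ∑ i : Fin n, ((if i.val = 0 then j else if i.val = 1 then
        (⟨D - 1 - k.val, by omega⟩ : Fin D) else ⟨0, by omega⟩) : Fin D).val
        = j.val + (D - 1 - k.val) := by
      have hfun : ∀ i : Fin n, ((if i.val = 0 then j else if i.val = 1 then
          (⟨D - 1 - k.val, by omega⟩ : Fin D) else ⟨0, by omega⟩) : Fin D).val
          = (if i = (⟨0, by omega⟩ : Fin n) then j.val else 0)
            + (if i = (⟨1, by omega⟩ : Fin n) then D - 1 - k.val else 0) := by
        intro i
        by_cases h0 : i.val = 0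
        · have : i = (⟨0, by omega⟩ : Fin n) := Fin.ext h0
          simp [h0, this]
        · by_cases h1 : i.val = 1
          · have e1 : i = (⟨1, by omega⟩ : Fin n) := Fin.ext h1
            have e0 : i ≠ (⟨0, by omega⟩ : Fin n) := fun hh => h0 (by rw [hh])
            simp [h0, h1, e1, e0]
          · have e1 : i ≠ (⟨1, by omega⟩ : Fin n) := fun hh => h1 (by rw [hh])
            have e0 : i ≠ (⟨0, by omega⟩ : Fin n) := fun hh => h0 (by rw [hh])
            simp [h0, h1, e1, e0]
      rw [Finset.sum_congr rfl (fun i _ => hfun i), Finset.sum_add_distrib,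
        Finset.sum_ite_eq' Finset.univ (⟨0, by omega⟩ : Fin n) (fun _ => j.val),
        Finset.sum_ite_eq' Finset.univ (⟨1, by omega⟩ : Fin n) (fun _ => D - 1 - k.val)]
      simp
    have hiff : (∑ i : Fin n, ((if i.val = 0 then j else if i.val = 1 then
        (⟨D - 1 - k.val, by omega⟩ : Fin D) else ⟨0, by omega⟩) : Fin D).val = D - 1) ↔ j = k := by
      rw [hsum, Fin.ext_iff]
      have := j.isLt
      have := k.isLt
      omega
    rw [Matrix.of_apply, Lfun, Matrix.one_apply]
    simp only [hiff]
  rw [hmat, Matrix.det_one]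

lemma minorM_zero {n D : ℕ} (hn : 2 ≤ n) (hD : 2 ≤ D) {T : (Fin n → Fin D) → ℂ}
    (hT : tensorRank T < D) : minorM hn hD T = 0 := by
  classical
  have hmem : tensorRank T ∈ {r | ∃ v : Fin r → (i : Fin n) → Fin D → ℂ,
      ∀ x, T x = ∑ p, ∏ i, v p i (x i)} :=
    Nat.sInf_mem (rank_set_nonempty (by omega) T)
  obtain ⟨v, hv⟩ := hmem
  set i0 : Fin n := ⟨0, by omega⟩ with hi0
  set B : Fin D → Fin (tensorRank T) → ℂ := fun j p => v p i0 j with hB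
  set C : Fin (tensorRank T) → Fin D → ℂ := fun p k => ∏ i ∈ Finset.univ.erase i0,
    v p i (if i.val = 1 then (⟨D - 1 - k.val, by omega⟩ : Fin D) else ⟨0, by omega⟩) with hC
  have hmat : (Matrix.of fun j k : Fin D =>
      T (fun i => if i.val = 0 then j else if i.val = 1 then ⟨D - 1 - k.val, by omega⟩
        else ⟨0, by omega⟩))
      = Matrix.of fun j k : Fin D => ∑ p : Fin (tensorRank T), B j p * C p k := by
    ext j k
    rw [Matrix.of_apply, Matrix.of_apply, hv]
    refine Finset.sum_congr rfl fun p _ => ?_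
    rw [← Finset.mul_prod_erase Finset.univ _ (Finset.mem_univ i0)]
    have h0 : (i0 : Fin n).val = 0 := rfl
    have hfirst : (if (i0 : Fin n).val = 0 then j else if (i0 : Fin n).val = 1 then
        (⟨D - 1 - k.val, by omega⟩ : Fin D) else ⟨0, by omega⟩) = j := by
      rw [if_pos h0]
    rw [hfirst]
    simp only [hB, hC]
    congr 1
    refine Finset.prod_congr rfl fun i hi => ?_
    have hne : i ≠ i0 := Finset.ne_of_mem_erase hi
    have h0' : i.val ≠ 0 := fun hh => hne (Fin.ext hh)
    rw [if_neg h0']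
  unfold minorM
  rw [hmat]
  exact det_sum_mul hT B C

theorem borderRank_L (n D : ℕ) (hn : 2 ≤ n) (hD : 2 ≤ D) :
    Filter.Tendsto
      (fun ε : ℂ => fun x : Fin n → Fin D =>
        (1 / ((D : ℂ) * ε ^ (D - 1))) * ∑ p : Fin D,
          zeta D ^ p.val * ∏ i, (ε ^ (x i).val * zeta D ^ (p.val * (x i).val)))
      (nhdsWithin 0 {(0 : ℂ)}ᶜ) (nhds (Lfun D n)) ∧
    borderRank (Lfun D n) = D := by
  have htend := L_tendsto n D hD
  refine ⟨htend, ?_⟩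
  have hεk : Filter.Tendsto (fun k : ℕ => (((k : ℂ) + 1)⁻¹)) Filter.atTop
      (nhdsWithin 0 {(0 : ℂ)}ᶜ) := by
    rw [tendsto_nhdsWithin_iff]
    constructor
    · have h1 : Filter.Tendsto (fun k : ℕ => ((k : ℝ) + 1)⁻¹) Filter.atTop (nhds 0) := by
        simpa using (tendsto_one_div_add_atTop_nhds_zero_nat :
          Filter.Tendsto (fun k : ℕ => 1 / ((k : ℝ) + 1)) Filter.atTop (nhds 0))
      have h2 := (Complex.continuous_ofReal.tendsto 0).comp h1
      rw [Complex.ofReal_zero] at h2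
      refine h2.congr fun k => ?_
      simp only [Function.comp_apply, Complex.ofReal_inv]
      push_cast
      ring
    · filter_upwards with k
      simp only [Set.mem_compl_iff, Set.mem_singleton_iff]
      exact inv_ne_zero (Nat.cast_add_one_ne_zero k)
  have hDmem : D ∈ {r | ∃ seq : ℕ → ((Fin n → Fin D) → ℂ),
      (∀ k, tensorRank (seq k) ≤ r) ∧ Filter.Tendsto seq Filter.atTop (nhds (Lfun D n))} := by
    refine ⟨fun k => fun x => (1 / ((D : ℂ) * (((k : ℂ) + 1)⁻¹) ^ (D - 1))) * ∑ p : Fin D,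
      zeta D ^ p.val * ∏ i, ((((k : ℂ) + 1)⁻¹) ^ (x i).val * zeta D ^ (p.val * (x i).val)),
      fun k => rank_le_D hn hD _, ?_⟩
    exact htend.comp hεk
  rw [borderRank]
  refine le_antisymm (Nat.sInf_le hDmem) ?_
  refine le_csInf ⟨D, hDmem⟩ fun r hr => ?_
  by_contra hlt
  push_neg at hlt
  obtain ⟨seq, hrk, hsq⟩ := hr
  have h0 : ∀ k, minorM hn hD (seq k) = 0 := fun k =>
    minorM_zero hn hD (lt_of_le_of_lt (hrk k) hlt)
  have h1 : Filter.Tendsto (fun k => minorM hn hD (seq k)) Filter.atTop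
      (nhds (minorM hn hD (Lfun D n))) :=
    ((minorM_continuous hn hD).tendsto _).comp hsq
  have h2 : Filter.Tendsto (fun k => minorM hn hD (seq k)) Filter.atTop (nhds (0 : ℂ)) := by
    simpa [h0] using (tendsto_const_nhds : Filter.Tendsto (fun _ : ℕ => (0 : ℂ))
      Filter.atTop (nhds 0))
  have h3 := tendsto_nhds_unique h1 h2
  rw [minorM_Lfun] at h3
  exact one_ne_zero h3
end
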